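/- arXiv:2105.01222 — 4 statements merged into one kernel-verified Lean document; each statement's English description precedes it below -/
import Mathlib

section
/- Let (Ω, μ) be a finite measure space, let t ∈ (0, 1), and let ε > 0. Let w : Ω → [0, ∞) be a bounded measurable function. Suppose v_j ∈ L¹(μ) are nonnegative and converge weakly in L¹ to v ∈ L¹(μ), i.e. ∫ v_j φ dμ → ∫ v φ dμ for every bounded measurable φ : Ω → ℝ, and suppose v ≥ ε almost everywhere. Then limsup_j ∫ w v_j^t dμ ≤ ∫ w v^t dμ. -/
/-!
The map `x ↦ x ^ t` is concave, so it lies below its tangent at `v ω`: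
`w v_j^t ≤ w v^t + (v_j - v) φ` with `φ = t w v^(t-1)`. Because `v ≥ ε`, the slope `φ` is a bounded
measurable test function, so integrating and passing to the weak limit kills the correction term.
-/

open Filter Topology MeasureTheory

lemma Real.rpow_le_rpow_add_mul_sub {a b t : ℝ} (ha : 0 ≤ a) (hb : 0 < b) (ht0 : 0 ≤ t)
    (ht1 : t ≤ 1) : a ^ t ≤ b ^ t + t * b ^ (t - 1) * (a - b) := by
  have hab : 0 ≤ a / b := div_nonneg ha hb.le
  have bernoulli : (a / b) ^ t ≤ 1 + t * (a / b - 1) := by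
    simpa using rpow_one_add_le_one_add_mul_self (s := a / b - 1) (by linarith) ht0 ht1
  calc a ^ t = b ^ t * (a / b) ^ t := by
        rw [← Real.mul_rpow hb.le hab, mul_div_cancel₀ _ hb.ne']
    _ ≤ b ^ t * (1 + t * (a / b - 1)) := by gcongr
    _ = b ^ t + t * b ^ (t - 1) * (a - b) := by
        rw [Real.rpow_sub hb, Real.rpow_one]
        field_simp

lemma Real.rpow_le_one_add {x t : ℝ} (hx : 0 ≤ x) (ht0 : 0 ≤ t) (ht1 : t ≤ 1) :
    x ^ t ≤ 1 + x := by
  have := Real.rpow_le_rpow_add_mul_sub hx one_pos ht0 ht1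
  rw [Real.one_rpow, Real.one_rpow, mul_one] at this
  nlinarith

lemma abs_mul_mul_rpow_sub_one_le {t ε M w u : ℝ} (ht0 : 0 ≤ t) (ht1 : t ≤ 1) (hε : 0 < ε)
    (hw0 : 0 ≤ w) (hwM : w ≤ M) (hu : ε ≤ u) :
    |t * w * u ^ (t - 1)| ≤ t * M * ε ^ (t - 1) := by
  have hupow : 0 ≤ u ^ (t - 1) := Real.rpow_nonneg (hε.le.trans hu) _
  rw [abs_of_nonneg (by positivity)]
  calc t * w * u ^ (t - 1) ≤ t * M * u ^ (t - 1) := by gcongr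
    _ ≤ t * M * ε ^ (t - 1) := mul_le_mul_of_nonneg_left
        (Real.rpow_le_rpow_of_nonpos hε hu (by linarith)) (mul_nonneg ht0 (hw0.trans hwM))

lemma exists_measurable_ae_eq_forall_le {Ω : Type*} [MeasurableSpace Ω] {μ : Measure Ω}
    {f : Ω → ℝ} {ε : ℝ} (hf : AEMeasurable f μ) (hε : ∀ᵐ ω ∂μ, ε ≤ f ω) :
    ∃ g : Ω → ℝ, Measurable g ∧ g =ᵐ[μ] f ∧ ∀ ω, ε ≤ g ω := by
  refine ⟨fun ω => max (hf.mk f ω) ε, hf.measurable_mk.max measurable_const, ?_,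
    fun ω => le_max_right _ _⟩
  filter_upwards [hf.ae_eq_mk, hε] with ω hmk hεω
  rw [← hmk, max_eq_left hεω]

namespace MeasureTheory

variable {Ω : Type*} [MeasurableSpace Ω] {μ : Measure Ω}

lemma Integrable.rpow_of_nonneg [IsFiniteMeasure μ] {f : Ω → ℝ} {t : ℝ} (hf : Integrable f μ)
    (hf0 : 0 ≤ᵐ[μ] f) (ht0 : 0 ≤ t) (ht1 : t ≤ 1) : Integrable (fun ω => f ω ^ t) μ := by
  refine ((integrable_const 1).add hf).mono' (hf.aemeasurable.pow_const t).aestronglyMeasurable ?_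
  filter_upwards [hf0] with ω hω
  rw [Real.norm_of_nonneg (Real.rpow_nonneg hω t)]
  exact Real.rpow_le_one_add hω ht0 ht1

/-- The slope `φ` is only a.e. equal to `t w b^(t-1)`, so that a measurable version can be used. -/
lemma integral_mul_rpow_le_add_integral_sub {w a b φ : Ω → ℝ} {t : ℝ} (ht0 : 0 ≤ t) (ht1 : t ≤ 1)
    (hw : 0 ≤ᵐ[μ] w) (ha : 0 ≤ᵐ[μ] a) (hb : ∀ᵐ ω ∂μ, 0 < b ω)
    (hφ : ∀ᵐ ω ∂μ, φ ω = t * w ω * b ω ^ (t - 1))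
    (hwa : Integrable (fun ω => w ω * a ω ^ t) μ) (hwb : Integrable (fun ω => w ω * b ω ^ t) μ)
    (haφ : Integrable (fun ω => a ω * φ ω) μ) (hbφ : Integrable (fun ω => b ω * φ ω) μ) :
    ∫ ω, w ω * a ω ^ t ∂μ ≤
      ∫ ω, w ω * b ω ^ t ∂μ + (∫ ω, a ω * φ ω ∂μ - ∫ ω, b ω * φ ω ∂μ) := by
  have hsub : Integrable (fun ω => a ω * φ ω - b ω * φ ω) μ := haφ.sub hbφ
  rw [← integral_sub haφ hbφ, ← integral_add hwb hsub]
  refine integral_mono_ae hwa (hwb.add hsub) ?_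
  filter_upwards [hw, ha, hb, hφ] with ω hwω haω hbω hφω
  calc w ω * a ω ^ t ≤ w ω * (b ω ^ t + t * b ω ^ (t - 1) * (a ω - b ω)) :=
        mul_le_mul_of_nonneg_left (Real.rpow_le_rpow_add_mul_sub haω hbω ht0 ht1) hwω
    _ = w ω * b ω ^ t + (a ω * φ ω - b ω * φ ω) := by rw [hφω]; ring

end MeasureTheory

lemma Filter.limsup_le_of_le_of_tendsto {a b : ℕ → ℝ} {L : ℝ}
    (ha : IsCoboundedUnder (· ≤ ·) atTop a) (hab : ∀ j, a j ≤ b j)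
    (hb : Tendsto b atTop (𝓝 L)) : limsup a atTop ≤ L :=
  (limsup_le_limsup (Eventually.of_forall hab) ha hb.isBoundedUnder_le).trans hb.limsup_eq.le

/-- If nonnegative `v_j → v` weakly in `L¹` on a finite measure space, `v ≥ ε > 0` a.e.,
`0 < t < 1` and `w ≥ 0` is bounded measurable, then `limsup ∫ w v_j^t ≤ ∫ w v^t`. -/
theorem limsup_integral_rpow_le
    {Ω : Type*} [MeasurableSpace Ω] (μ : Measure Ω) [IsFiniteMeasure μ]
    (t ε : ℝ) (ht0 : 0 < t) (ht1 : t < 1) (hε : 0 < ε)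
    (w : Ω → ℝ) (hwmeas : Measurable w) (hwnn : ∀ ω, 0 ≤ w ω)
    (hwbdd : ∃ M : ℝ, ∀ ω, w ω ≤ M)
    (v : ℕ → Ω → ℝ) (v₀ : Ω → ℝ)
    (hv : ∀ j, Integrable (v j) μ) (hvnn : ∀ j, 0 ≤ᵐ[μ] v j)
    (hv₀ : Integrable v₀ μ)
    (hweak : ∀ φ : Ω → ℝ, Measurable φ → (∃ M : ℝ, ∀ ω, |φ ω| ≤ M) →
      Tendsto (fun j => ∫ ω, v j ω * φ ω ∂μ) atTop (𝓝 (∫ ω, v₀ ω * φ ω ∂μ)))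
    (hv₀ε : ∀ᵐ ω ∂μ, ε ≤ v₀ ω) :
    limsup (fun j => ∫ ω, w ω * v j ω ^ t ∂μ) atTop ≤ ∫ ω, w ω * v₀ ω ^ t ∂μ := by
  obtain ⟨M, hwM⟩ := hwbdd
  obtain ⟨u, hu_meas, hu_ae, hu_ε⟩ := exists_measurable_ae_eq_forall_le hv₀.aemeasurable hv₀ε
  set φ : Ω → ℝ := fun ω => t * w ω * u ω ^ (t - 1)
  have hφ_meas : Measurable φ := (measurable_const.mul hwmeas).mul (hu_meas.pow_const _)
  have hφ_bdd (ω : Ω) : |φ ω| ≤ t * M * ε ^ (t - 1) :=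
    abs_mul_mul_rpow_sub_one_le ht0.le ht1.le hε (hwnn ω) (hwM ω) (hu_ε ω)
  have hφ_eq : ∀ᵐ ω ∂μ, φ ω = t * w ω * v₀ ω ^ (t - 1) := hu_ae.mono fun ω h => by simp [φ, h]
  have hv₀_nn : 0 ≤ᵐ[μ] v₀ := hv₀ε.mono fun ω h => hε.le.trans h
  have hw_bdd : ∀ᵐ ω ∂μ, ‖w ω‖ ≤ M := ae_of_all _ fun ω => by
    simpa [abs_of_nonneg (hwnn ω)] using hwM ω
  have hwf {f : Ω → ℝ} (hf : Integrable f μ) (hf0 : 0 ≤ᵐ[μ] f) :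
      Integrable (fun ω => w ω * f ω ^ t) μ :=
    (hf.rpow_of_nonneg hf0 ht0.le ht1.le).bdd_mul hwmeas.aestronglyMeasurable hw_bdd
  have hfφ {f : Ω → ℝ} (hf : Integrable f μ) : Integrable (fun ω => f ω * φ ω) μ :=
    hf.mul_bdd hφ_meas.aestronglyMeasurable (ae_of_all _ hφ_bdd)
  have hle (j : ℕ) := integral_mul_rpow_le_add_integral_sub ht0.le ht1.le (ae_of_all _ hwnn)
    (hvnn j) (hv₀ε.mono fun ω h => hε.trans_le h) hφ_eq (hwf (hv j) (hvnn j)) (hwf hv₀ hv₀_nn)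
    (hfφ (hv j)) (hfφ hv₀)
  have hlim : Tendsto (fun j => ∫ ω, w ω * v₀ ω ^ t ∂μ +
      (∫ ω, v j ω * φ ω ∂μ - ∫ ω, v₀ ω * φ ω ∂μ)) atTop (𝓝 (∫ ω, w ω * v₀ ω ^ t ∂μ)) := by
    simpa using tendsto_const_nhds.add
      ((hweak φ hφ_meas ⟨_, hφ_bdd⟩).sub_const (∫ ω, v₀ ω * φ ω ∂μ))
  refine limsup_le_of_le_of_tendsto (isCoboundedUnder_le_of_le atTop (x := 0) fun j => ?_) hle hlim
  exact integral_nonneg_of_ae <| (hvnn j).mono fun ω h =>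
    mul_nonneg (hwnn ω) (Real.rpow_nonneg h t)
end

section
/- For every real t with 0 ≤ t ≤ 1, the function (x, y) ↦ x²·y^{t−1} is convex on the convex set {(x, y) ∈ ℝ² : x ≥ 0, y > 0}. -/
/-! Writing `x² y^(t-1) = x² / y^(1-t)`, the theorem is the case `g y = y^(1-t)` of a general
fact: `x² / g y` is convex wherever `g` is concave and positive. Concavity lets us replace
the denominator at a convex combination by the convex combination of the denominators, and the
two-term Cauchy–Schwarz inequality (Sedrakyan's form) finishes. -/

open Set

theorem sq_add_le_mul_add_div {a b u v : ℝ} (ha : 0 ≤ a) (hb : 0 ≤ b) (hu : 0 < u) (hv : 0 < v)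
    (x y : ℝ) : (a * x + b * y) ^ 2 ≤ (a * (x ^ 2 / u) + b * (y ^ 2 / v)) * (a * u + b * v) := by
  obtain ⟨X, rfl⟩ : ∃ X, x = X * u := ⟨x / u, (div_mul_cancel₀ x hu.ne').symm⟩
  obtain ⟨Y, rfl⟩ : ∃ Y, y = Y * v := ⟨y / v, (div_mul_cancel₀ y hv.ne').symm⟩
  have hX : (X * u) ^ 2 / u = X ^ 2 * u := by field_simp
  have hY : (Y * v) ^ 2 / v = Y ^ 2 * v := by field_simp
  rw [hX, hY]
  -- the gap between the two sides is `a b u v (X - Y)²`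
  nlinarith [mul_nonneg (mul_nonneg (mul_nonneg ha hb) (mul_pos hu hv).le) (sq_nonneg (X - Y))]

theorem ConcaveOn.convexOn_sq_div {s : Set ℝ} {g : ℝ → ℝ} (hg : ConcaveOn ℝ s g)
    (hg_pos : ∀ y ∈ s, 0 < g y) : ConvexOn ℝ (univ ×ˢ s) (fun p : ℝ × ℝ => p.1 ^ 2 / g p.2) := by
  refine ⟨convex_univ.prod hg.1, ?_⟩
  rintro ⟨x₁, y₁⟩ ⟨-, hy₁⟩ ⟨x₂, y₂⟩ ⟨-, hy₂⟩ a b ha hb hab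
  simp only [Prod.smul_mk, Prod.mk_add_mk, smul_eq_mul]
  have hg₁ := hg_pos y₁ hy₁
  have hg₂ := hg_pos y₂ hy₂
  have hmix_pos : 0 < a * g y₁ + b * g y₂ := by
    nlinarith [mul_le_mul_of_nonneg_left (min_le_left (g y₁) (g y₂)) ha,
      mul_le_mul_of_nonneg_left (min_le_right (g y₁) (g y₂)) hb, lt_min hg₁ hg₂]
  have hmix_le : a * g y₁ + b * g y₂ ≤ g (a * y₁ + b * y₂) := hg.2 hy₁ hy₂ ha hb hab
  calc (a * x₁ + b * x₂) ^ 2 / g (a * y₁ + b * y₂)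
      ≤ (a * x₁ + b * x₂) ^ 2 / (a * g y₁ + b * g y₂) :=
        div_le_div_of_nonneg_left (sq_nonneg _) hmix_pos hmix_le
    _ ≤ a * (x₁ ^ 2 / g y₁) + b * (x₂ ^ 2 / g y₂) :=
        div_le_of_le_mul₀ hmix_pos.le (by positivity)
          (sq_add_le_mul_add_div ha hb hg₁ hg₂ x₁ x₂)

/-- For `0 ≤ t ≤ 1`, the function `(x, y) ↦ x² · y^(t-1)` is convex on
`{(x, y) : x ≥ 0, y > 0}`. -/
theorem convexOn_sq_mul_rpow (t : ℝ) (ht0 : 0 ≤ t) (ht1 : t ≤ 1) :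
    ConvexOn ℝ {p : ℝ × ℝ | 0 ≤ p.1 ∧ 0 < p.2}
      (fun p : ℝ × ℝ => p.1 ^ 2 * p.2 ^ (t - 1)) := by
  have hconcave : ConcaveOn ℝ (Ioi 0) (fun y : ℝ => y ^ (1 - t)) :=
    (Real.concaveOn_rpow (by linarith) (by linarith)).subset Ioi_subset_Ici_self (convex_Ioi 0)
  have hconvex := hconcave.convexOn_sq_div fun y hy => Real.rpow_pos_of_pos hy _
  refine (hconvex.subset (fun p hp => ⟨trivial, hp.2⟩) ((convex_Ici 0).prod (convex_Ioi 0))).congr ?_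
  rintro ⟨x, y⟩ ⟨-, hy⟩
  simp only [div_eq_mul_inv, ← Real.rpow_neg hy.le, neg_sub]
end

section
/- Let (Ω, μ) be a σ-finite measure space, 1 < q < ∞ with conjugate exponent q', and n a natural number. Let w_j, w ∈ L^q(μ; ℝⁿ) with ∫ ⟨w_j, g⟩ dμ → ∫ ⟨w, g⟩ dμ for every g ∈ L^{q'}(μ; ℝⁿ), and let v_j, v ∈ L¹(μ) be nonnegative with ∫ v_j φ dμ → ∫ v φ dμ for every bounded measurable φ : Ω → ℝ. Let Φ : [0, ∞) × [0, ∞) → [0, ∞) be continuous, convex, and nondecreasing in its first variable (for each fixed y ≥ 0). Then ∫ Φ(|w(ω)|, v(ω)) dμ(ω) ≤ liminf_j ∫ Φ(|w_j(ω)|, v_j(ω)) dμ(ω). -/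
/-!
Because `Φ` is convex, continuous and nondecreasing in its first variable, the integrand
`(p, y) ↦ Φ(‖p‖, y)` is the supremum of countably many affine minorants `⟪p, α⟫ + y b + c`.
Fix finitely many of them and a set of finite measure, and pick measurably at each point the
largest one there. The resulting coefficient fields `α(ω), b(ω), c(ω)` are bounded and vanish
off a set of finite measure, so they are admissible test functions for both weak convergences:
the integral of the affine expression along `(w_j, v_j)` converges to its integral along
`(w, v)`, and it stays below `∫ Φ(‖w_j‖, v_j)` since `v_j ≥ 0`. These integrals along `(w, v)`
exhaust `∫ Φ(‖w‖, v)` by Fatou's lemma.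
-/

open Filter Topology MeasureTheory ENNReal

theorem exists_affine_le_of_lt_of_monotone {Φ : ℝ × ℝ → ℝ}
    (hΦcont : ContinuousOn Φ (Set.Ici (0 : ℝ) ×ˢ Set.Ici (0 : ℝ)))
    (hΦconv : ConvexOn ℝ (Set.Ici (0 : ℝ) ×ˢ Set.Ici (0 : ℝ)) Φ)
    (hΦmono : ∀ y : ℝ, 0 ≤ y → ∀ x₁ x₂ : ℝ, 0 ≤ x₁ → x₁ ≤ x₂ → Φ (x₁, y) ≤ Φ (x₂, y))
    {x₀ y₀ r : ℝ} (hx₀ : 0 ≤ x₀) (hy₀ : 0 ≤ y₀) (hr : r < Φ (x₀, y₀)) :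
    ∃ a b c : ℝ, 0 ≤ a ∧ (∀ x y, 0 ≤ x → 0 ≤ y → a * x + b * y + c ≤ Φ (x, y)) ∧
      a * x₀ + b * y₀ + c = r := by
  obtain ⟨l, c, hle, heq⟩ := hΦconv.exists_affine_le_of_lt (𝕜 := ℝ) (x := (x₀, y₀))
    (Set.mk_mem_prod hx₀ hy₀) hr (isClosed_Ici.prod isClosed_Ici) hΦcont.lowerSemicontinuousOn
  obtain ⟨a, b, hl⟩ : ∃ a b : ℝ, ∀ x y, l (x, y) = a * x + b * y :=
    ⟨l (1, 0), l (0, 1), fun x y => by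
      rw [show ((x, y) : ℝ × ℝ) = x • (1, 0) + y • (0, 1) by simp, map_add, map_smul, map_smul,
        smul_eq_mul, smul_eq_mul, mul_comm x, mul_comm y]⟩
  have hmin (x y : ℝ) (hx : 0 ≤ x) (hy : 0 ≤ y) : a * x + b * y + c ≤ Φ (x, y) := by
    simpa [hl] using hle ⟨(x, y), hx, hy⟩
  simp only [RCLike.re_to_real, hl] at heq
  rcases le_total 0 a with ha | ha
  · exact ⟨a, b, c, ha, hmin, heq⟩
  -- a negative `x`-slope is flattened to `0`; monotonicity in `x` covers the points `x ≥ x₀`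
  refine ⟨0, b, c + a * x₀, le_rfl, fun x y hx hy => ?_, by linarith⟩
  rcases le_total x₀ x with h | h
  · linarith [hmin x₀ y hx₀ hy, hΦmono y hy x₀ x hx₀ h]
  · nlinarith [hmin x y hx hy]

section AffineMinorants

variable {F : Type*} [NormedAddCommGroup F] [InnerProductSpace ℝ F]

def affineEval (t : F × ℝ × ℝ) (p : F) (y : ℝ) : ℝ :=
  inner ℝ p t.1 + y * t.2.1 + t.2.2

@[simp]
theorem affineEval_zero (p : F) (y : ℝ) : affineEval 0 p y = 0 := by
  simp [affineEval]

theorem continuous_affineEval :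
    Continuous fun z : (F × ℝ × ℝ) × F × ℝ => affineEval z.1 z.2.1 z.2.2 := by
  unfold affineEval; fun_prop

variable (F) in
def affineMinorants (Φ : ℝ × ℝ → ℝ) : Set (F × ℝ × ℝ) :=
  {t | ∀ p y, 0 ≤ y → affineEval t p y ≤ Φ (‖p‖, y)}

variable {Φ : ℝ × ℝ → ℝ}

theorem zero_mem_affineMinorants (hΦnn : ∀ x y : ℝ, 0 ≤ x → 0 ≤ y → 0 ≤ Φ (x, y)) :
    (0 : F × ℝ × ℝ) ∈ affineMinorants F Φ :=
  fun p y hy => by simpa using hΦnn _ _ (norm_nonneg p) hy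

theorem exists_mem_affineMinorants_eq
    (hΦcont : ContinuousOn Φ (Set.Ici (0 : ℝ) ×ˢ Set.Ici (0 : ℝ)))
    (hΦconv : ConvexOn ℝ (Set.Ici (0 : ℝ) ×ˢ Set.Ici (0 : ℝ)) Φ)
    (hΦmono : ∀ y : ℝ, 0 ≤ y → ∀ x₁ x₂ : ℝ, 0 ≤ x₁ → x₁ ≤ x₂ → Φ (x₁, y) ≤ Φ (x₂, y))
    (p : F) {y r : ℝ} (hy : 0 ≤ y) (hr : r < Φ (‖p‖, y)) :
    ∃ t ∈ affineMinorants F Φ, affineEval t p y = r := by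
  obtain ⟨a, b, c, ha, hmin, heq⟩ :=
    exists_affine_le_of_lt_of_monotone hΦcont hΦconv hΦmono (norm_nonneg p) hy hr
  have hnorm : ‖(a / ‖p‖) • p‖ ≤ a := by
    rcases (norm_nonneg p).eq_or_lt with hp | hp
    · simp [← hp, ha]
    · rw [norm_smul, Real.norm_of_nonneg (by positivity), div_mul_cancel₀ _ hp.ne']
  have hinner : inner ℝ p ((a / ‖p‖) • p) = a * ‖p‖ := by
    rcases (norm_nonneg p).eq_or_lt with hp | hp
    · simp [norm_eq_zero.1 hp.symm]
    · rw [real_inner_smul_right, real_inner_self_eq_norm_sq]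
      field_simp
  refine ⟨((a / ‖p‖) • p, b, c), fun p' y' hy' => ?_, by simp [affineEval, hinner, ← heq]; ring⟩
  have : inner ℝ p' ((a / ‖p‖) • p) ≤ a * ‖p'‖ :=
    (real_inner_le_norm _ _).trans (by nlinarith [norm_nonneg p'])
  simp only [affineEval]
  linarith [hmin _ _ (norm_nonneg p') hy']

theorem exists_dense_seq_affineMinorants [SecondCountableTopology F]
    (hΦcont : ContinuousOn Φ (Set.Ici (0 : ℝ) ×ˢ Set.Ici (0 : ℝ)))
    (hΦconv : ConvexOn ℝ (Set.Ici (0 : ℝ) ×ˢ Set.Ici (0 : ℝ)) Φ)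
    (hΦnn : ∀ x y : ℝ, 0 ≤ x → 0 ≤ y → 0 ≤ Φ (x, y))
    (hΦmono : ∀ y : ℝ, 0 ≤ y → ∀ x₁ x₂ : ℝ, 0 ≤ x₁ → x₁ ≤ x₂ → Φ (x₁, y) ≤ Φ (x₂, y)) :
    ∃ d : ℕ → F × ℝ × ℝ, (∀ k, d k ∈ affineMinorants F Φ) ∧
      ∀ (p : F) (y : ℝ), 0 ≤ y → ∀ r < Φ (‖p‖, y), ∃ k, r < affineEval (d k) p y := by
  have : Nonempty (affineMinorants F Φ) := ⟨⟨0, zero_mem_affineMinorants hΦnn⟩⟩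
  obtain ⟨u, hu⟩ := TopologicalSpace.exists_dense_seq (affineMinorants F Φ)
  refine ⟨fun k => u k, fun k => (u k).2, fun p y hy r hr => ?_⟩
  obtain ⟨r', hrr', hr'⟩ := exists_between hr
  obtain ⟨t, ht, hteq⟩ := exists_mem_affineMinorants_eq hΦcont hΦconv hΦmono p hy hr'
  have hopen : IsOpen {s : affineMinorants F Φ | r < affineEval (s : F × ℝ × ℝ) p y} :=
    isOpen_lt continuous_const <| continuous_affineEval.comp <|
      continuous_subtype_val.prodMk (continuous_const (y := ((p, y) : F × ℝ)))
  exact hu.exists_mem_open hopen ⟨⟨t, ht⟩, by simpa [hteq] using hrr'⟩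

/-- A choice of a maximiser of `affineEval · p y` over `{0, d 0, …, d (N - 1)}` that, unlike an
`argmax` by choice, depends measurably on `(p, y)`. -/
noncomputable def greedyArgmax (d : ℕ → F × ℝ × ℝ) (p : F) (y : ℝ) : ℕ → F × ℝ × ℝ
  | 0 => 0
  | N + 1 => if affineEval (greedyArgmax d p y N) p y < affineEval (d N) p y then d N
      else greedyArgmax d p y N

variable {d : ℕ → F × ℝ × ℝ} {p : F} {y : ℝ}

theorem monotone_affineEval_greedyArgmax :
    Monotone fun N => affineEval (greedyArgmax d p y N) p y := by
  refine monotone_nat_of_le_succ fun N => ?_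
  simp only [greedyArgmax]
  split_ifs with h
  exacts [h.le, le_rfl]

theorem affineEval_le_affineEval_greedyArgmax {k N : ℕ} (hk : k < N) :
    affineEval (d k) p y ≤ affineEval (greedyArgmax d p y N) p y := by
  refine le_trans ?_ (monotone_affineEval_greedyArgmax hk)
  simp only [greedyArgmax]
  split_ifs with h
  exacts [le_rfl, not_lt.1 h]

theorem affineEval_greedyArgmax_nonneg (N : ℕ) : 0 ≤ affineEval (greedyArgmax d p y N) p y := by
  simpa [greedyArgmax] using monotone_affineEval_greedyArgmax (d := d) (p := p) (y := y) N.zero_le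

theorem greedyArgmax_mem {S : Set (F × ℝ × ℝ)} (h0 : 0 ∈ S) (hd : ∀ k, d k ∈ S) (N : ℕ) :
    greedyArgmax d p y N ∈ S := by
  induction N with
  | zero => exact h0
  | succ N ih => simp only [greedyArgmax]; split_ifs; exacts [hd N, ih]

theorem norm_greedyArgmax_le (N : ℕ) :
    ‖greedyArgmax d p y N‖ ≤ ∑ k ∈ Finset.range N, ‖d k‖ := by
  induction N with
  | zero => simp [greedyArgmax]
  | succ N ih =>
    rw [Finset.sum_range_succ]
    have hsum : 0 ≤ ∑ k ∈ Finset.range N, ‖d k‖ := Finset.sum_nonneg fun k _ => norm_nonneg (d k)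
    simp only [greedyArgmax]
    split_ifs <;> linarith [norm_nonneg (d N)]

theorem measurable_greedyArgmax [MeasurableSpace F] [BorelSpace F] [SecondCountableTopology F]
    (d : ℕ → F × ℝ × ℝ) (N : ℕ) : Measurable fun z : F × ℝ => greedyArgmax d z.1 z.2 N := by
  induction N with
  | zero => exact measurable_const
  | succ N ih =>
    refine Measurable.ite (measurableSet_lt ?_ ?_) measurable_const ih
    · exact continuous_affineEval.measurable.comp (ih.prodMk measurable_id)
    · exact continuous_affineEval.measurable.comp (measurable_const.prodMk measurable_id)

theorem tendsto_affineEval_greedyArgmax (hΦnn : ∀ x y : ℝ, 0 ≤ x → 0 ≤ y → 0 ≤ Φ (x, y))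
    (hd : ∀ k, d k ∈ affineMinorants F Φ)
    (hdense : ∀ r < Φ (‖p‖, y), ∃ k, r < affineEval (d k) p y) (hy : 0 ≤ y) :
    Tendsto (fun N => affineEval (greedyArgmax d p y N) p y) atTop (𝓝 (Φ (‖p‖, y))) := by
  refine tendsto_order.2 ⟨fun r hr => ?_, fun r hr => Eventually.of_forall fun N => ?_⟩
  · obtain ⟨k, hk⟩ := hdense r hr
    exact (eventually_gt_atTop k).mono fun N hN =>
      hk.trans_le (affineEval_le_affineEval_greedyArgmax hN)
  · exact (greedyArgmax_mem (zero_mem_affineMinorants hΦnn) hd N p y hy).trans_lt hr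

end AffineMinorants

section WeakLowerSemicontinuity

variable {Ω : Type*} [MeasurableSpace Ω] {μ : Measure Ω}

theorem ofReal_integral_le_lintegral_ofReal (f : Ω → ℝ) :
    ENNReal.ofReal (∫ ω, f ω ∂μ) ≤ ∫⁻ ω, ENNReal.ofReal (f ω) ∂μ := by
  by_cases hf : Integrable f μ
  · rw [integral_eq_lintegral_pos_part_sub_lintegral_neg_part hf]
    exact (ENNReal.ofReal_le_ofReal (sub_le_self _ toReal_nonneg)).trans ofReal_toReal_le
  · simp [integral_undef hf]

theorem lintegral_ofReal_le_liminf_of_tendsto {f : ℕ → Ω → ℝ} {g : Ω → ℝ}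
    (hf : ∀ N, AEMeasurable (f N) μ)
    (hfg : ∀ᵐ ω ∂μ, Tendsto (fun N => f N ω) atTop (𝓝 (g ω))) :
    ∫⁻ ω, ENNReal.ofReal (g ω) ∂μ ≤ liminf (fun N => ∫⁻ ω, ENNReal.ofReal (f N ω) ∂μ) atTop :=
  calc ∫⁻ ω, ENNReal.ofReal (g ω) ∂μ = ∫⁻ ω, liminf (fun N => ENNReal.ofReal (f N ω)) atTop ∂μ :=
        lintegral_congr_ae <| hfg.mono fun _ h =>
          ((ENNReal.continuous_ofReal.tendsto _).comp h).liminf_eq.symm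
    _ ≤ _ := lintegral_liminf_le' fun N => (hf N).ennreal_ofReal

theorem ae_nonneg_of_tendsto_integral_mul {v : ℕ → Ω → ℝ} {v₀ : Ω → ℝ}
    (hvnn : ∀ j, 0 ≤ᵐ[μ] v j) (hv₀ : Integrable v₀ μ)
    (hvweak : ∀ φ : Ω → ℝ, Measurable φ → (∃ M : ℝ, ∀ ω, |φ ω| ≤ M) →
      Tendsto (fun j => ∫ ω, v j ω * φ ω ∂μ) atTop (𝓝 (∫ ω, v₀ ω * φ ω ∂μ))) :
    0 ≤ᵐ[μ] v₀ := by
  refine ae_nonneg_of_forall_setIntegral_nonneg hv₀ fun s hs _ => ?_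
  have hind (f : Ω → ℝ) : ∫ ω, f ω * s.indicator 1 ω ∂μ = ∫ ω in s, f ω ∂μ := by
    rw [← integral_indicator hs]
    congr 1 with ω
    by_cases h : ω ∈ s <;> simp [h]
  have hlim := hvweak (s.indicator 1) (measurable_const.indicator hs)
    ⟨1, fun ω => by by_cases h : ω ∈ s <;> simp [h]⟩
  simp only [hind] at hlim
  exact ge_of_tendsto' hlim fun j => integral_nonneg_of_ae (ae_restrict_of_ae (hvnn j))

theorem memLp_of_bound_of_forall_notMem_eq_zero {E : Type*} [NormedAddCommGroup E] {f : Ω → E}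
    (hf : AEStronglyMeasurable f μ) {C : ℝ} (hC : ∀ ω, ‖f ω‖ ≤ C) {s : Set Ω} (hs : μ s ≠ ∞)
    (hfs : ∀ ω ∉ s, f ω = 0) (p : ℝ≥0∞) : MemLp f p μ :=
  (memLp_top_of_bound hf C (ae_of_all _ hC)).mono_exponent_of_measure_support_ne_top hfs hs le_top

variable {F : Type*} [NormedAddCommGroup F]

structure IsBoundedFiniteMeasureSupport (μ : Measure Ω) (τ : Ω → F × ℝ × ℝ) : Prop where
  stronglyMeasurable : StronglyMeasurable τ
  bounded : ∃ C, ∀ ω, ‖τ ω‖ ≤ C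
  measure_support_ne_top : μ (Function.support τ) ≠ ∞

namespace IsBoundedFiniteMeasureSupport

variable {τ : Ω → F × ℝ × ℝ}

theorem memLp_fst (hτ : IsBoundedFiniteMeasureSupport μ τ) (p : ℝ≥0∞) :
    MemLp (fun ω => (τ ω).1) p μ :=
  have ⟨C, hC⟩ := hτ.bounded
  memLp_of_bound_of_forall_notMem_eq_zero
    (continuous_fst.comp_stronglyMeasurable hτ.stronglyMeasurable).aestronglyMeasurable
    (fun ω => (norm_fst_le _).trans (hC ω)) hτ.measure_support_ne_top
    (fun ω hω => by simp [Function.notMem_support.1 hω]) p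

theorem integrable_snd_snd (hτ : IsBoundedFiniteMeasureSupport μ τ) :
    Integrable (fun ω => (τ ω).2.2) μ :=
  have ⟨C, hC⟩ := hτ.bounded
  memLp_one_iff_integrable.1 <| memLp_of_bound_of_forall_notMem_eq_zero
    ((continuous_snd.comp continuous_snd).comp_stronglyMeasurable
      hτ.stronglyMeasurable).aestronglyMeasurable
    (fun ω => ((norm_snd_le _).trans (norm_snd_le _)).trans (hC ω)) hτ.measure_support_ne_top
    (fun ω hω => by simp [Function.notMem_support.1 hω]) 1

theorem measurable_snd_fst (hτ : IsBoundedFiniteMeasureSupport μ τ) :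
    Measurable fun ω => (τ ω).2.1 :=
  ((continuous_fst.comp continuous_snd).comp_stronglyMeasurable hτ.stronglyMeasurable).measurable

theorem abs_snd_fst_le (hτ : IsBoundedFiniteMeasureSupport μ τ) :
    ∃ C : ℝ, ∀ ω, |(τ ω).2.1| ≤ C :=
  have ⟨C, hC⟩ := hτ.bounded
  ⟨C, fun ω => ((norm_fst_le _).trans (norm_snd_le _)).trans (hC ω)⟩

theorem integrable_mul_snd_fst (hτ : IsBoundedFiniteMeasureSupport μ τ) {z : Ω → ℝ}
    (hz : Integrable z μ) : Integrable (fun ω => z ω * (τ ω).2.1) μ :=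
  have ⟨_, hC⟩ := hτ.abs_snd_fst_le
  hz.mul_bdd hτ.measurable_snd_fst.aestronglyMeasurable (ae_of_all _ hC)

variable [InnerProductSpace ℝ F]

theorem integrable_inner (hτ : IsBoundedFiniteMeasureSupport μ τ) {q : ℝ} (hq : 1 ≤ q)
    {u : Ω → F} (hu : MemLp u (ENNReal.ofReal q) μ) :
    Integrable (fun ω => inner ℝ (u ω) (τ ω).1) μ := by
  obtain ⟨C, hC⟩ := hτ.bounded
  have hmem : MemLp (fun ω => inner ℝ (u ω) (τ ω).1) (ENNReal.ofReal q) μ :=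
    hu.of_le_mul (hu.1.inner (hτ.memLp_fst ⊤).1) <| ae_of_all _ fun ω =>
      (norm_inner_le_norm _ _).trans <| by
        rw [mul_comm]; gcongr; exact (norm_fst_le _).trans (hC ω)
  exact memLp_one_iff_integrable.1 <| hmem.mono_exponent_of_measure_support_ne_top
    (fun ω hω => by simp [Function.notMem_support.1 hω]) hτ.measure_support_ne_top
    (ENNReal.one_le_ofReal.2 hq)

theorem integral_affineEval (hτ : IsBoundedFiniteMeasureSupport μ τ) {q : ℝ} (hq : 1 ≤ q)
    {u : Ω → F} (hu : MemLp u (ENNReal.ofReal q) μ) {z : Ω → ℝ} (hz : Integrable z μ) :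
    Integrable (fun ω => affineEval (τ ω) (u ω) (z ω)) μ ∧
      ∫ ω, affineEval (τ ω) (u ω) (z ω) ∂μ =
        ∫ ω, inner ℝ (u ω) (τ ω).1 ∂μ + ∫ ω, z ω * (τ ω).2.1 ∂μ + ∫ ω, (τ ω).2.2 ∂μ := by
  have h₁ := hτ.integrable_inner hq hu
  have h₂ := hτ.integrable_mul_snd_fst hz
  have h₃ := hτ.integrable_snd_snd
  have h₁₂ : Integrable (fun ω => inner ℝ (u ω) (τ ω).1 + z ω * (τ ω).2.1) μ := h₁.add h₂
  exact ⟨h₁₂.add h₃, by simp only [affineEval]; rw [integral_add h₁₂ h₃, integral_add h₁ h₂]⟩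

theorem tendsto_integral_affineEval (hτ : IsBoundedFiniteMeasureSupport μ τ)
    {q q' : ℝ} (hq : 1 ≤ q) {w : ℕ → Ω → F} {w₀ : Ω → F}
    (hw : ∀ j, MemLp (w j) (ENNReal.ofReal q) μ) (hw₀ : MemLp w₀ (ENNReal.ofReal q) μ)
    (hwweak : ∀ g : Ω → F, MemLp g (ENNReal.ofReal q') μ →
      Tendsto (fun j => ∫ ω, inner ℝ (w j ω) (g ω) ∂μ) atTop
        (𝓝 (∫ ω, (inner ℝ (w₀ ω) (g ω) : ℝ) ∂μ)))
    {v : ℕ → Ω → ℝ} {v₀ : Ω → ℝ} (hv : ∀ j, Integrable (v j) μ) (hv₀ : Integrable v₀ μ)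
    (hvweak : ∀ φ : Ω → ℝ, Measurable φ → (∃ M : ℝ, ∀ ω, |φ ω| ≤ M) →
      Tendsto (fun j => ∫ ω, v j ω * φ ω ∂μ) atTop (𝓝 (∫ ω, v₀ ω * φ ω ∂μ))) :
    Tendsto (fun j => ∫ ω, affineEval (τ ω) (w j ω) (v j ω) ∂μ) atTop
      (𝓝 (∫ ω, affineEval (τ ω) (w₀ ω) (v₀ ω) ∂μ)) := by
  simp only [(hτ.integral_affineEval hq (hw _) (hv _)).2, (hτ.integral_affineEval hq hw₀ hv₀).2]
  exact ((hwweak _ (hτ.memLp_fst _)).add (hvweak _ hτ.measurable_snd_fst hτ.abs_snd_fst_le)).add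
    tendsto_const_nhds

theorem lintegral_affineEval_le_liminf (hτ : IsBoundedFiniteMeasureSupport μ τ)
    {Φ : ℝ × ℝ → ℝ} (hτΦ : ∀ ω, τ ω ∈ affineMinorants F Φ)
    {q q' : ℝ} (hq : 1 ≤ q) {w : ℕ → Ω → F} {w₀ : Ω → F}
    (hw : ∀ j, MemLp (w j) (ENNReal.ofReal q) μ) (hw₀ : MemLp w₀ (ENNReal.ofReal q) μ)
    (hwweak : ∀ g : Ω → F, MemLp g (ENNReal.ofReal q') μ →
      Tendsto (fun j => ∫ ω, inner ℝ (w j ω) (g ω) ∂μ) atTop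
        (𝓝 (∫ ω, (inner ℝ (w₀ ω) (g ω) : ℝ) ∂μ)))
    {v : ℕ → Ω → ℝ} {v₀ : Ω → ℝ} (hv : ∀ j, Integrable (v j) μ) (hvnn : ∀ j, 0 ≤ᵐ[μ] v j)
    (hv₀ : Integrable v₀ μ)
    (hvweak : ∀ φ : Ω → ℝ, Measurable φ → (∃ M : ℝ, ∀ ω, |φ ω| ≤ M) →
      Tendsto (fun j => ∫ ω, v j ω * φ ω ∂μ) atTop (𝓝 (∫ ω, v₀ ω * φ ω ∂μ)))
    (hpos : 0 ≤ᵐ[μ] fun ω => affineEval (τ ω) (w₀ ω) (v₀ ω)) :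
    ∫⁻ ω, ENNReal.ofReal (affineEval (τ ω) (w₀ ω) (v₀ ω)) ∂μ ≤
      liminf (fun j => ∫⁻ ω, ENNReal.ofReal (Φ (‖w j ω‖, v j ω)) ∂μ) atTop := by
  have hlim := (ENNReal.continuous_ofReal.tendsto _).comp
    (hτ.tendsto_integral_affineEval hq hw hw₀ hwweak hv hv₀ hvweak)
  rw [← ofReal_integral_eq_lintegral_ofReal (hτ.integral_affineEval hq hw₀ hv₀).1 hpos,
    ← hlim.liminf_eq]
  refine liminf_le_liminf (Eventually.of_forall fun j => ?_)
  exact (ofReal_integral_le_lintegral_ofReal _).trans <| lintegral_mono_ae <|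
    (hvnn j).mono fun ω hω => ENNReal.ofReal_le_ofReal (hτΦ ω _ _ hω)

end IsBoundedFiniteMeasureSupport

end WeakLowerSemicontinuity

section Approximation

variable {Ω F : Type*} [MeasurableSpace Ω] (μ : Measure Ω) [SigmaFinite μ]
  [NormedAddCommGroup F] [InnerProductSpace ℝ F]

noncomputable def greedyField (d : ℕ → F × ℝ × ℝ) (W : Ω → F) (V : Ω → ℝ) (N : ℕ) :
    Ω → F × ℝ × ℝ :=
  (spanningSets μ N).indicator fun ω => greedyArgmax d (W ω) (V ω) N

variable {μ} {d : ℕ → F × ℝ × ℝ} {W : Ω → F} {V : Ω → ℝ}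

theorem affineEval_greedyField_nonneg (N : ℕ) (ω : Ω) :
    0 ≤ affineEval (greedyField μ d W V N ω) (W ω) (V ω) := by
  by_cases h : ω ∈ spanningSets μ N <;>
    simp [greedyField, h, affineEval_greedyArgmax_nonneg]

theorem greedyField_mem_affineMinorants {Φ : ℝ × ℝ → ℝ}
    (hΦnn : ∀ x y : ℝ, 0 ≤ x → 0 ≤ y → 0 ≤ Φ (x, y)) (hd : ∀ k, d k ∈ affineMinorants F Φ)
    (N : ℕ) (ω : Ω) : greedyField μ d W V N ω ∈ affineMinorants F Φ := by
  have h0 := zero_mem_affineMinorants (F := F) hΦnn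
  by_cases h : ω ∈ spanningSets μ N <;> simp [greedyField, h, h0, greedyArgmax_mem h0 hd]

theorem tendsto_affineEval_greedyField {Φ : ℝ × ℝ → ℝ}
    (hΦnn : ∀ x y : ℝ, 0 ≤ x → 0 ≤ y → 0 ≤ Φ (x, y)) (hd : ∀ k, d k ∈ affineMinorants F Φ)
    (hdense : ∀ (p : F) (y : ℝ), 0 ≤ y → ∀ r < Φ (‖p‖, y), ∃ k, r < affineEval (d k) p y)
    {ω : Ω} (hω : 0 ≤ V ω) :
    Tendsto (fun N => affineEval (greedyField μ d W V N ω) (W ω) (V ω)) atTop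
      (𝓝 (Φ (‖W ω‖, V ω))) :=
  (tendsto_affineEval_greedyArgmax hΦnn hd (hdense _ _ hω) hω).congr' <|
    (eventually_mem_spanningSets μ ω).mono fun N hN => by simp [greedyField, hN]

variable [MeasurableSpace F] [BorelSpace F] [SecondCountableTopology F]

theorem measurable_greedyField (hW : Measurable W) (hV : Measurable V) (N : ℕ) :
    Measurable (greedyField μ d W V N) :=
  ((measurable_greedyArgmax d N).comp (hW.prodMk hV)).indicator (measurableSet_spanningSets μ N)

theorem isBoundedFiniteMeasureSupport_greedyField (hW : Measurable W) (hV : Measurable V)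
    (N : ℕ) : IsBoundedFiniteMeasureSupport μ (greedyField μ d W V N) where
  stronglyMeasurable := (measurable_greedyField hW hV N).stronglyMeasurable
  bounded := ⟨_, fun ω => (norm_indicator_le_norm_self _ ω).trans (norm_greedyArgmax_le N)⟩
  measure_support_ne_top := ne_top_of_le_ne_top (measure_spanningSets_lt_top μ N).ne
    (measure_mono Set.support_indicator_subset)

end Approximation

theorem polyconvex_liminf_general
    {Ω : Type*} [MeasurableSpace Ω] (μ : Measure Ω) [SigmaFinite μ]
    (q q' : ℝ) (hq : 1 < q) (n : ℕ)
    (w : ℕ → Ω → EuclideanSpace ℝ (Fin n)) (w₀ : Ω → EuclideanSpace ℝ (Fin n))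
    (hw : ∀ j, MemLp (w j) (ENNReal.ofReal q) μ)
    (hw₀ : MemLp w₀ (ENNReal.ofReal q) μ)
    (hwweak : ∀ g : Ω → EuclideanSpace ℝ (Fin n), MemLp g (ENNReal.ofReal q') μ →
      Tendsto (fun j => ∫ ω, inner ℝ (w j ω) (g ω) ∂μ) atTop
        (𝓝 (∫ ω, (inner ℝ (w₀ ω) (g ω) : ℝ) ∂μ)))
    (v : ℕ → Ω → ℝ) (v₀ : Ω → ℝ)
    (hv : ∀ j, Integrable (v j) μ) (hvnn : ∀ j, 0 ≤ᵐ[μ] v j)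
    (hv₀ : Integrable v₀ μ)
    (hvweak : ∀ φ : Ω → ℝ, Measurable φ → (∃ M : ℝ, ∀ ω, |φ ω| ≤ M) →
      Tendsto (fun j => ∫ ω, v j ω * φ ω ∂μ) atTop (𝓝 (∫ ω, v₀ ω * φ ω ∂μ)))
    (Φ : ℝ × ℝ → ℝ)
    (hΦcont : ContinuousOn Φ (Set.Ici (0 : ℝ) ×ˢ Set.Ici (0 : ℝ)))
    (hΦconv : ConvexOn ℝ (Set.Ici (0 : ℝ) ×ˢ Set.Ici (0 : ℝ)) Φ)
    (hΦnn : ∀ x y : ℝ, 0 ≤ x → 0 ≤ y → 0 ≤ Φ (x, y))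
    (hΦmono : ∀ y : ℝ, 0 ≤ y → ∀ x₁ x₂ : ℝ, 0 ≤ x₁ → x₁ ≤ x₂ → Φ (x₁, y) ≤ Φ (x₂, y)) :
    ∫⁻ ω, ENNReal.ofReal (Φ (‖w₀ ω‖, v₀ ω)) ∂μ ≤
      liminf (fun j => ∫⁻ ω, ENNReal.ofReal (Φ (‖w j ω‖, v j ω)) ∂μ) atTop := by
  obtain ⟨d, hd, hdense⟩ := exists_dense_seq_affineMinorants
    (F := EuclideanSpace ℝ (Fin n)) hΦcont hΦconv hΦnn hΦmono
  -- measurable representatives, since `hvweak` only accepts everywhere measurable test functions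
  set W := hw₀.1.mk w₀
  set V := hv₀.1.mk v₀
  have hW : Measurable W := hw₀.1.stronglyMeasurable_mk.measurable
  have hV : Measurable V := hv₀.1.stronglyMeasurable_mk.measurable
  have hWV : ∀ᵐ ω ∂μ, w₀ ω = W ω ∧ v₀ ω = V ω := hw₀.1.ae_eq_mk.and hv₀.1.ae_eq_mk
  have hV₀ : ∀ᵐ ω ∂μ, 0 ≤ V ω := by
    filter_upwards [ae_nonneg_of_tendsto_integral_mul hvnn hv₀ hvweak, hWV] with ω h hω
    exact hω.2 ▸ h
  let τ := greedyField μ d W V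
  calc ∫⁻ ω, ENNReal.ofReal (Φ (‖w₀ ω‖, v₀ ω)) ∂μ
      = ∫⁻ ω, ENNReal.ofReal (Φ (‖W ω‖, V ω)) ∂μ :=
        lintegral_congr_ae (hWV.mono fun ω h => by simp only [h.1, h.2])
    _ ≤ liminf (fun N => ∫⁻ ω, ENNReal.ofReal (affineEval (τ N ω) (W ω) (V ω)) ∂μ) atTop :=
        lintegral_ofReal_le_liminf_of_tendsto (fun N => (continuous_affineEval.measurable.comp
          ((measurable_greedyField hW hV N).prodMk (hW.prodMk hV))).aemeasurable)
          (hV₀.mono fun ω hω => tendsto_affineEval_greedyField hΦnn hd hdense hω)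
    _ = liminf (fun N => ∫⁻ ω, ENNReal.ofReal (affineEval (τ N ω) (w₀ ω) (v₀ ω)) ∂μ) atTop := by
        congr 1 with N
        exact lintegral_congr_ae (hWV.mono fun ω h => by simp only [h.1, h.2])
    _ ≤ _ := liminf_le_of_frequently_le' <| Frequently.of_forall fun N =>
        (isBoundedFiniteMeasureSupport_greedyField hW hV N).lintegral_affineEval_le_liminf
          (greedyField_mem_affineMinorants hΦnn hd N) hq.le hw hw₀ hwweak hv hvnn hv₀ hvweak
          (hWV.mono fun ω h => by
            simpa only [Pi.zero_apply, h.1, h.2] using affineEval_greedyField_nonneg N ω)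

/-- Polyconvexity lower semicontinuity lemma: if `w_j ⇀ w` weakly in `L^q(μ; ℝⁿ)`,
`v_j ⇀ v` weakly in `L¹(μ)` with `v_j ≥ 0`, and `Φ ≥ 0` is continuous, convex and
nondecreasing in its first variable, then
`∫ Φ(|w|, v) ≤ liminf ∫ Φ(|w_j|, v_j)`. -/
theorem polyconvex_liminf
    {Ω : Type*} [MeasurableSpace Ω] (μ : Measure Ω) [SigmaFinite μ]
    (q q' : ℝ) (hq : 1 < q) (hqq' : 1 / q + 1 / q' = 1) (n : ℕ)
    (w : ℕ → Ω → EuclideanSpace ℝ (Fin n)) (w₀ : Ω → EuclideanSpace ℝ (Fin n))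
    (hw : ∀ j, MemLp (w j) (ENNReal.ofReal q) μ)
    (hw₀ : MemLp w₀ (ENNReal.ofReal q) μ)
    (hwweak : ∀ g : Ω → EuclideanSpace ℝ (Fin n), MemLp g (ENNReal.ofReal q') μ →
      Tendsto (fun j => ∫ ω, inner ℝ (w j ω) (g ω) ∂μ) atTop
        (𝓝 (∫ ω, (inner ℝ (w₀ ω) (g ω) : ℝ) ∂μ)))
    (v : ℕ → Ω → ℝ) (v₀ : Ω → ℝ)
    (hv : ∀ j, Integrable (v j) μ) (hvnn : ∀ j, 0 ≤ᵐ[μ] v j)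
    (hv₀ : Integrable v₀ μ)
    (hvweak : ∀ φ : Ω → ℝ, Measurable φ → (∃ M : ℝ, ∀ ω, |φ ω| ≤ M) →
      Tendsto (fun j => ∫ ω, v j ω * φ ω ∂μ) atTop (𝓝 (∫ ω, v₀ ω * φ ω ∂μ)))
    (Φ : ℝ × ℝ → ℝ)
    (hΦcont : ContinuousOn Φ (Set.Ici (0 : ℝ) ×ˢ Set.Ici (0 : ℝ)))
    (hΦconv : ConvexOn ℝ (Set.Ici (0 : ℝ) ×ˢ Set.Ici (0 : ℝ)) Φ)
    (hΦnn : ∀ x y : ℝ, 0 ≤ x → 0 ≤ y → 0 ≤ Φ (x, y))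
    (hΦmono : ∀ y : ℝ, 0 ≤ y → ∀ x₁ x₂ : ℝ, 0 ≤ x₁ → x₁ ≤ x₂ → Φ (x₁, y) ≤ Φ (x₂, y)) :
    ∫⁻ ω, ENNReal.ofReal (Φ (‖w₀ ω‖, v₀ ω)) ∂μ ≤
      liminf (fun j => ∫⁻ ω, ENNReal.ofReal (Φ (‖w j ω‖, v j ω)) ∂μ) atTop :=
  polyconvex_liminf_general μ q q' hq n w w₀ hw hw₀ hwweak v v₀ hv hvnn hv₀ hvweak Φ hΦcont hΦconv
    hΦnn hΦmono
end

section
/- Let (Ω, μ) be a finite measure space, 1 < p < ∞ with conjugate exponent p', and let 0 < c ≤ C be constants. Suppose Ψ_j ∈ L^p(μ) are nonnegative and converge weakly in L^p(μ) to Ψ, i.e. ∫ Ψ_j g dμ → ∫ Ψ g dμ for every g ∈ L^{p'}(μ); suppose Φ : Ω → [0, ∞) is measurable with ∫_A Φ dμ ≤ liminf_j ∫_A Ψ_j dμ for every measurable set A ⊆ Ω; suppose η_j, η : Ω → ℝ are measurable with c ≤ η_j ≤ C and c ≤ η ≤ C almost everywhere, η_j → η uniformly on Ω, and lim_j ∫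 Ψ_j^p η_j dμ = ∫ Φ^p η dμ < ∞. Then Φ = Ψ μ-almost everywhere and Ψ_j → Φ strongly in L^p(μ), i.e. ‖Ψ_j − Φ‖_{L^p} → 0. -/
open Filter Topology MeasureTheory ENNReal

/-!
Replace `μ` by the equivalent measure `ν = η₀ μ`. Since `η j → η₀` uniformly and
`∫ Ψ_j ^ p` stays bounded, the energy hypothesis becomes `‖Ψ_j‖_{L^p(ν)} → ‖Φ‖_{L^p(ν)}`, and
weak convergence in `L^p(μ)` gives weak convergence in `L^p(ν)`. Testing the weak convergence
on indicators and comparing with the liminf hypothesis gives `Φ ≤ Ψ`, while weak lower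
semicontinuity of the norm (Hölder's inequality against `Ψ ^ (p - 1)`) gives
`‖Ψ‖ ≤ lim ‖Ψ_j‖ = ‖Φ‖`; hence `Φ = Ψ`. The midpoints `(Ψ_j + Φ) / 2` also converge weakly
to `Φ`, so their norms tend to `‖Φ‖` too, and the uniform convexity estimate
`|a - b| ^ p ≤ ε (a ^ p + b ^ p) + K_ε ((a ^ p + b ^ p) / 2 - ((a + b) / 2) ^ p)`
forces `∫ |Ψ_j - Φ| ^ p dν → 0`.
-/

lemma exists_le_add_mul_of_isCompact {X : Type*} [TopologicalSpace X] {S : Set X}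
    (hS : IsCompact S) {L M G : X → ℝ} (hL : Continuous L) (hM : Continuous M)
    (hG : Continuous G) (hG0 : ∀ x ∈ S, 0 ≤ G x) (hLM : ∀ x ∈ S, G x = 0 → L x < M x) :
    ∃ K, ∀ x ∈ S, L x ≤ M x + K * G x := by
  have hGT : ∀ x ∈ S ∩ {x | M x ≤ L x}, G x ≠ 0 := fun x hx h0 => (hLM x hx.1 h0).not_ge hx.2
  obtain ⟨K, hK⟩ := (hS.inter_right (isClosed_le hM hL)).bddAbove_image
    ((hL.sub hM).continuousOn.div hG.continuousOn hGT)
  refine ⟨max K 0, fun x hx => ?_⟩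
  have hKG : 0 ≤ max K 0 * G x := mul_nonneg (le_max_right K 0) (hG0 x hx)
  by_cases hML : M x ≤ L x
  · have hGx : 0 < G x := (hG0 x hx).lt_of_ne' (hGT x ⟨hx, hML⟩)
    have hratio : (L x - M x) / G x ≤ max K 0 :=
      (hK ⟨x, ⟨hx, hML⟩, rfl⟩).trans (le_max_left _ _)
    rw [div_le_iff₀ hGx] at hratio
    linarith
  · linarith

lemma rpow_midpoint_lt {p a b : ℝ} (hp : 1 < p) (ha : 0 ≤ a) (hb : 0 ≤ b) (hab : a ≠ b) :
    ((a + b) / 2) ^ p < (a ^ p + b ^ p) / 2 := by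
  have h := (strictConvexOn_rpow hp).2 (Set.mem_Ici.2 ha) (Set.mem_Ici.2 hb) hab
    (by norm_num : (0 : ℝ) < 1 / 2) (by norm_num : (0 : ℝ) < 1 / 2) (by norm_num)
  simp only [smul_eq_mul] at h
  rw [show (a + b) / 2 = 1 / 2 * a + 1 / 2 * b by ring]
  linarith

lemma rpow_midpoint_le {p a b : ℝ} (hp : 1 < p) (ha : 0 ≤ a) (hb : 0 ≤ b) :
    ((a + b) / 2) ^ p ≤ (a ^ p + b ^ p) / 2 := by
  rcases eq_or_ne a b with rfl | hab
  · rw [add_self_div_two, add_self_div_two]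
  · exact (rpow_midpoint_lt hp ha hb hab).le

lemma self_mul_rpow_sub_one {x p : ℝ} (hx : 0 ≤ x) (hp : p ≠ 0) : x * x ^ (p - 1) = x ^ p := by
  rw [← Real.rpow_one_add' hx (by simpa using hp), add_sub_cancel]

/- By homogeneity it suffices to take `a + b = 2`: there compactness applies, and by strict
convexity the defect vanishes only at `a = b = 1`, where `|a - b| ^ p = 0 < 2 ε`. -/
lemma exists_abs_sub_rpow_le {p ε : ℝ} (hp : 1 < p) (hε : 0 < ε) :
    ∃ K, ∀ a b : ℝ, 0 ≤ a → 0 ≤ b →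
      |a - b| ^ p ≤ ε * (a ^ p + b ^ p) + K * ((a ^ p + b ^ p) / 2 - ((a + b) / 2) ^ p) := by
  have hp0 : 0 < p := zero_lt_one.trans hp
  have hpow := Real.continuous_rpow_const hp0.le
  set S := (fun t : ℝ => (t, 2 - t)) '' Set.Icc 0 2
  have hS0 : ∀ x ∈ S, 0 ≤ x.1 ∧ 0 ≤ x.2 := by
    rintro _ ⟨t, ⟨h0, h2⟩, rfl⟩
    exact ⟨h0, sub_nonneg.2 h2⟩
  obtain ⟨K, hK⟩ := exists_le_add_mul_of_isCompact (isCompact_Icc.image (by fun_prop))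
    (L := fun x : ℝ × ℝ => |x.1 - x.2| ^ p) (M := fun x => ε * (x.1 ^ p + x.2 ^ p))
    (G := fun x => (x.1 ^ p + x.2 ^ p) / 2 - ((x.1 + x.2) / 2) ^ p) (S := S)
    (by fun_prop) (by fun_prop) (by fun_prop)
    (fun x hx => sub_nonneg.2 (rpow_midpoint_le hp (hS0 x hx).1 (hS0 x hx).2))
    (by
      rintro _ ⟨t, ⟨h0, h2⟩, rfl⟩ hG
      obtain rfl : t = 1 := by
        by_contra ht
        have := rpow_midpoint_lt hp h0 (sub_nonneg.2 h2) (by contrapose! ht; linarith)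
        simp only at hG
        linarith
      norm_num [Real.zero_rpow hp0.ne', hε])
  refine ⟨K, fun a b ha hb => ?_⟩
  rcases (add_nonneg ha hb).eq_or_lt with hab | hab
  · obtain ⟨rfl, rfl⟩ : a = 0 ∧ b = 0 := ⟨by linarith, by linarith⟩
    simp [Real.zero_rpow hp0.ne']
  set s := (a + b) / 2 with hs_def
  have hs : 0 < s := by positivity
  have hsp : 0 < s ^ p := Real.rpow_pos_of_pos hs p
  have h := hK (a / s, b / s) ⟨a / s, ⟨by positivity, by rw [div_le_iff₀ hs, hs_def]; linarith⟩,
    by simp only [Prod.mk.injEq, true_and]; field_simp; rw [hs_def]; ring⟩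
  simp only at h
  rw [← sub_div, show (a / s + b / s) / 2 = s / s by ring, abs_div, abs_of_pos hs,
    Real.div_rpow (abs_nonneg _) hs.le, Real.div_rpow ha hs.le, Real.div_rpow hb hs.le,
    Real.div_rpow hs.le hs.le] at h
  have hscale : ε * (a ^ p / s ^ p + b ^ p / s ^ p) + K * ((a ^ p / s ^ p + b ^ p / s ^ p) / 2
      - s ^ p / s ^ p) = (ε * (a ^ p + b ^ p) + K * ((a ^ p + b ^ p) / 2 - s ^ p)) / s ^ p := by
    field_simp
  rwa [hscale, div_le_div_iff_of_pos_right hsp] at h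

section

variable {Ω : Type*} [MeasurableSpace Ω] {μ : Measure Ω} {ι : Type*} {l : Filter ι}

lemma eventually_lt_of_le_rpow_mul_rpow {p q : ℝ} (hpq : p.HolderConjugate q) {a u : ι → ℝ}
    {A B : ℝ} (ha : Tendsto a l (𝓝 A)) (hu : ∀ i, 0 ≤ u i)
    (hle : ∀ i, a i ≤ u i ^ (1 / p) * A ^ (1 / q)) (hB : B < A) :
    ∀ᶠ i in l, B < u i := by
  rcases lt_or_ge B 0 with hB0 | hB0
  · exact Eventually.of_forall fun i => hB0.trans_le (hu i)
  have hA : 0 < A := hB0.trans_lt hB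
  have hAq : 0 < A ^ (1 / q) := Real.rpow_pos_of_pos hA _
  have hp : 0 < 1 / p := one_div_pos.2 hpq.pos
  have hlt : B ^ (1 / p) * A ^ (1 / q) < A :=
    calc B ^ (1 / p) * A ^ (1 / q) < A ^ (1 / p) * A ^ (1 / q) :=
          mul_lt_mul_of_pos_right (Real.rpow_lt_rpow hB0 hB hp) hAq
      _ = A := by
          rw [← Real.rpow_add hA, one_div, one_div, hpq.inv_add_inv_eq_one, Real.rpow_one]
  filter_upwards [ha.eventually (lt_mem_nhds hlt)] with i hi
  have hBu : B ^ (1 / p) < u i ^ (1 / p) := lt_of_mul_lt_mul_right (hi.trans_le (hle i)) hAq.le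
  exact (Real.rpow_lt_rpow_iff hB0 (hu i) hp).1 hBu

lemma memLp_ofReal_iff_integrable_rpow {f : Ω → ℝ} {p : ℝ} (hp : 0 < p)
    (hf : AEStronglyMeasurable f μ) (hf0 : 0 ≤ᵐ[μ] f) :
    MemLp f (ENNReal.ofReal p) μ ↔ Integrable (fun ω => f ω ^ p) μ := by
  rw [← integrable_norm_rpow_iff hf (by simpa using hp) ofReal_ne_top, toReal_ofReal hp.le]
  refine integrable_congr ?_
  filter_upwards [hf0] with ω h
  rw [Real.norm_of_nonneg h]

lemma MeasureTheory.MemLp.integrable_rpow {f : Ω → ℝ} {p : ℝ} (hp : 0 < p)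
    (hf0 : 0 ≤ᵐ[μ] f) (hf : MemLp f (ENNReal.ofReal p) μ) :
    Integrable (fun ω => f ω ^ p) μ :=
  (memLp_ofReal_iff_integrable_rpow hp hf.1 hf0).1 hf

lemma MeasureTheory.MemLp.rpow_sub_one {f : Ω → ℝ} {p q : ℝ} (hpq : p.HolderConjugate q)
    (hf0 : 0 ≤ᵐ[μ] f) (hf : MemLp f (ENNReal.ofReal p) μ) :
    MemLp (fun ω => f ω ^ (p - 1)) (ENNReal.ofReal q) μ := by
  rw [memLp_ofReal_iff_integrable_rpow hpq.symm.pos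
    (hf.1.aemeasurable.pow_const _).aestronglyMeasurable
    (by filter_upwards [hf0] with ω h using Real.rpow_nonneg h _)]
  refine (hf.integrable_rpow hpq.pos hf0).congr ?_
  filter_upwards [hf0] with ω h
  rw [← Real.rpow_mul h, hpq.sub_one_mul_conj]

lemma MeasureTheory.MemLp.add_div_two {p : ℝ≥0∞} {f g : Ω → ℝ} (hf : MemLp f p μ)
    (hg : MemLp g p μ) : MemLp (fun ω => (f ω + g ω) / 2) p μ := by
  simpa [div_eq_inv_mul] using (hf.add hg).const_mul 2⁻¹

lemma memLp_of_integrable_rpow_mul {f w : Ω → ℝ} {p c : ℝ} (hp : 0 < p) (hc : 0 < c)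
    (hf : AEStronglyMeasurable f μ) (hf0 : 0 ≤ᵐ[μ] f) (hw : ∀ᵐ ω ∂μ, c ≤ w ω)
    (hfw : Integrable (fun ω => f ω ^ p * w ω) μ) :
    MemLp f (ENNReal.ofReal p) μ := by
  refine (memLp_ofReal_iff_integrable_rpow hp hf hf0).2
    ((hfw.const_mul c⁻¹).mono' (hf.aemeasurable.pow_const p).aestronglyMeasurable ?_)
  filter_upwards [hf0, hw] with ω h0 h
  have hfp : 0 ≤ f ω ^ p := Real.rpow_nonneg h0 p
  rw [Real.norm_of_nonneg hfp, ← div_eq_inv_mul, le_div_iff₀ hc]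
  exact mul_le_mul_of_nonneg_left h hfp

lemma tendsto_eLpNorm_of_tendsto_integral_abs_rpow {p : ℝ} (hp : 0 < p) {f : ι → Ω → ℝ}
    (hf : ∀ i, MemLp (f i) (ENNReal.ofReal p) μ)
    (h : Tendsto (fun i => ∫ ω, |f i ω| ^ p ∂μ) l (𝓝 0)) :
    Tendsto (fun i => eLpNorm (f i) (ENNReal.ofReal p) μ) l (𝓝 0) := by
  have hcont : Tendsto (fun x : ℝ => ENNReal.ofReal (x ^ p⁻¹)) (𝓝 0) (𝓝 0) := by
    simpa [Function.comp_def, Real.zero_rpow (inv_ne_zero hp.ne')] using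
      (ENNReal.continuous_ofReal.comp (Real.continuous_rpow_const (inv_nonneg.2 hp.le))).tendsto 0
  refine (hcont.comp h).congr fun i => ?_
  rw [(hf i).eLpNorm_eq_integral_rpow_norm (by simpa using hp) ofReal_ne_top, toReal_ofReal hp.le]
  simp [Real.norm_eq_abs]

lemma tendsto_eLpNorm_of_measure_le_smul {ν : Measure Ω} {c : ℝ≥0∞} (hc : c ≠ ∞)
    (hμν : μ ≤ c • ν) {p : ℝ≥0∞} {f : ι → Ω → ℝ}
    (h : Tendsto (fun i => eLpNorm (f i) p ν) l (𝓝 0)) :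
    Tendsto (fun i => eLpNorm (f i) p μ) l (𝓝 0) := by
  have hbound := ENNReal.Tendsto.const_mul h (Or.inr (ENNReal.rpow_ne_top_of_nonneg
    toReal_nonneg hc) : (0 : ℝ≥0∞) ≠ 0 ∨ c ^ (1 / p).toReal ≠ ∞)
  rw [mul_zero] at hbound
  exact tendsto_of_tendsto_of_tendsto_of_le_of_le tendsto_const_nhds hbound
    (fun _ => zero_le) fun _ => eLpNorm_le_of_measure_le_smul hμν

lemma eventually_lt_integral_rpow_of_tendsto_integral_mul {p : ℝ} (hp : 1 < p)
    {f : ι → Ω → ℝ} {g : Ω → ℝ} (hf0 : ∀ i, 0 ≤ᵐ[μ] f i) (hg0 : 0 ≤ᵐ[μ] g)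
    (hf : ∀ i, MemLp (f i) (ENNReal.ofReal p) μ) (hg : MemLp g (ENNReal.ofReal p) μ)
    (htest : Tendsto (fun i => ∫ ω, f i ω * g ω ^ (p - 1) ∂μ) l (𝓝 (∫ ω, g ω ^ p ∂μ)))
    {B : ℝ} (hB : B < ∫ ω, g ω ^ p ∂μ) :
    ∀ᶠ i in l, B < ∫ ω, f i ω ^ p ∂μ := by
  have hpq := Real.HolderConjugate.conjExponent hp
  have hgq : ∫ ω, (g ω ^ (p - 1)) ^ p.conjExponent ∂μ = ∫ ω, g ω ^ p ∂μ := by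
    refine integral_congr_ae ?_
    filter_upwards [hg0] with ω h
    rw [← Real.rpow_mul h, hpq.sub_one_mul_conj]
  refine eventually_lt_of_le_rpow_mul_rpow hpq htest
    (fun i => integral_nonneg_of_ae ?_) (fun i => ?_) hB
  · filter_upwards [hf0 i] with ω h using Real.rpow_nonneg h p
  · rw [← hgq]
    exact integral_mul_le_Lp_mul_Lq_of_nonneg hpq (hf0 i)
      (by filter_upwards [hg0] with ω h using Real.rpow_nonneg h _) (hf i)
      (hg.rpow_sub_one hpq hg0)

lemma integral_rpow_le_of_tendsto_integral_mul [l.NeBot] {p L : ℝ} (hp : 1 < p)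
    {f : ι → Ω → ℝ} {g : Ω → ℝ} (hf0 : ∀ i, 0 ≤ᵐ[μ] f i) (hg0 : 0 ≤ᵐ[μ] g)
    (hf : ∀ i, MemLp (f i) (ENNReal.ofReal p) μ) (hg : MemLp g (ENNReal.ofReal p) μ)
    (htest : Tendsto (fun i => ∫ ω, f i ω * g ω ^ (p - 1) ∂μ) l (𝓝 (∫ ω, g ω ^ p ∂μ)))
    (hnorm : Tendsto (fun i => ∫ ω, f i ω ^ p ∂μ) l (𝓝 L)) :
    ∫ ω, g ω ^ p ∂μ ≤ L :=
  le_of_forall_lt_imp_le_of_dense fun _ hB => ge_of_tendsto hnorm <|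
    (eventually_lt_integral_rpow_of_tendsto_integral_mul hp hf0 hg0 hf hg htest hB).mono
      fun _ h => h.le

lemma ae_eq_of_ae_le_of_integral_rpow_le {f g : Ω → ℝ} {p : ℝ} (hp : 0 < p)
    (hf0 : 0 ≤ᵐ[μ] f) (hfg : f ≤ᵐ[μ] g) (hf : Integrable (fun ω => f ω ^ p) μ)
    (hg : Integrable (fun ω => g ω ^ p) μ) (hle : ∫ ω, g ω ^ p ∂μ ≤ ∫ ω, f ω ^ p ∂μ) :
    f =ᵐ[μ] g := by
  have hdiff : 0 ≤ᵐ[μ] fun ω => g ω ^ p - f ω ^ p := by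
    filter_upwards [hf0, hfg] with ω h0 h
    exact sub_nonneg.2 (Real.rpow_le_rpow h0 h hp.le)
  have hzero : ∫ ω, (g ω ^ p - f ω ^ p) ∂μ = 0 :=
    le_antisymm (by rw [integral_sub hg hf]; linarith) (integral_nonneg_of_ae hdiff)
  filter_upwards [(integral_eq_zero_iff_of_nonneg_ae hdiff (hg.sub hf)).1 hzero, hf0, hfg]
    with ω h h0 hle
  exact ((Real.rpow_left_inj h0 (h0.trans hle) hp.ne').1 (sub_eq_zero.1 h).symm)

lemma integral_abs_sub_rpow_le {p δ K : ℝ} (hp : 0 < p)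
    (hK : ∀ a b : ℝ, 0 ≤ a → 0 ≤ b →
      |a - b| ^ p ≤ δ * (a ^ p + b ^ p) + K * ((a ^ p + b ^ p) / 2 - ((a + b) / 2) ^ p))
    {f g : Ω → ℝ} (hf0 : 0 ≤ᵐ[μ] f) (hg0 : 0 ≤ᵐ[μ] g)
    (hf : MemLp f (ENNReal.ofReal p) μ) (hg : MemLp g (ENNReal.ofReal p) μ) :
    ∫ ω, |f ω - g ω| ^ p ∂μ ≤ δ * (∫ ω, f ω ^ p ∂μ + ∫ ω, g ω ^ p ∂μ)
      + K * ((∫ ω, f ω ^ p ∂μ + ∫ ω, g ω ^ p ∂μ) / 2 - ∫ ω, ((f ω + g ω) / 2) ^ p ∂μ) := by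
  have hfp := hf.integrable_rpow hp hf0
  have hgp := hg.integrable_rpow hp hg0
  have hsum : Integrable (fun ω => f ω ^ p + g ω ^ p) μ := hfp.add hgp
  have hmp : Integrable (fun ω => ((f ω + g ω) / 2) ^ p) μ :=
    (hf.add_div_two hg).integrable_rpow hp <| by
      filter_upwards [hf0, hg0] with ω h1 h2 using by linarith
  have hdefect : Integrable (fun ω => (f ω ^ p + g ω ^ p) / 2 - ((f ω + g ω) / 2) ^ p) μ :=
    (hsum.div_const 2).sub hmp
  calc ∫ ω, |f ω - g ω| ^ p ∂μ
      ≤ ∫ ω, (δ * (f ω ^ p + g ω ^ p)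
        + K * ((f ω ^ p + g ω ^ p) / 2 - ((f ω + g ω) / 2) ^ p)) ∂μ :=
        integral_mono_ae ((hf.sub hg).abs.integrable_rpow hp (ae_of_all _ fun _ => abs_nonneg _))
          ((hsum.const_mul δ).add (hdefect.const_mul K))
          (by filter_upwards [hf0, hg0] with ω h1 h2 using hK _ _ h1 h2)
    _ = _ := by
        rw [integral_add (hsum.const_mul δ) (hdefect.const_mul K), integral_const_mul,
          integral_const_mul, integral_sub (hsum.div_const 2) hmp, integral_div,
          integral_add hfp hgp]

lemma tendsto_integral_abs_sub_rpow_of_tendsto_midpoint {p : ℝ} (hp : 1 < p)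
    {f : ι → Ω → ℝ} {g : Ω → ℝ} (hf0 : ∀ i, 0 ≤ᵐ[μ] f i) (hg0 : 0 ≤ᵐ[μ] g)
    (hf : ∀ i, MemLp (f i) (ENNReal.ofReal p) μ) (hg : MemLp g (ENNReal.ofReal p) μ)
    (hnorm : Tendsto (fun i => ∫ ω, f i ω ^ p ∂μ) l (𝓝 (∫ ω, g ω ^ p ∂μ)))
    (hmid : Tendsto (fun i => ∫ ω, ((f i ω + g ω) / 2) ^ p ∂μ) l (𝓝 (∫ ω, g ω ^ p ∂μ))) :
    Tendsto (fun i => ∫ ω, |f i ω - g ω| ^ p ∂μ) l (𝓝 0) := by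
  set E := ∫ ω, g ω ^ p ∂μ
  have hE : 0 ≤ E := integral_nonneg_of_ae (by
    filter_upwards [hg0] with ω h using Real.rpow_nonneg h p)
  refine tendsto_order.2 ⟨fun B hB => Eventually.of_forall fun i => hB.trans_le
    (integral_nonneg fun ω => Real.rpow_nonneg (abs_nonneg _) p), fun ε hε => ?_⟩
  set δ := ε / (2 * E + 1)
  obtain ⟨K, hK⟩ := exists_abs_sub_rpow_le hp (show 0 < δ by positivity)
  have hlim : Tendsto (fun i => δ * (∫ ω, f i ω ^ p ∂μ + E)
      + K * ((∫ ω, f i ω ^ p ∂μ + E) / 2 - ∫ ω, ((f i ω + g ω) / 2) ^ p ∂μ)) l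
      (𝓝 (δ * (E + E) + K * ((E + E) / 2 - E))) :=
    ((hnorm.add_const E).const_mul δ).add ((((hnorm.add_const E).div_const 2).sub hmid).const_mul K)
  have hlt : δ * (E + E) + K * ((E + E) / 2 - E) < ε := by
    rw [add_self_div_two, sub_self, mul_zero, add_zero, div_mul_eq_mul_div,
      div_lt_iff₀ (by positivity)]
    nlinarith
  filter_upwards [hlim.eventually (gt_mem_nhds hlt)] with i hi using
    (integral_abs_sub_rpow_le (zero_lt_one.trans hp) hK (hf0 i) hg0 (hf i) hg).trans_lt hi

theorem tendsto_eLpNorm_sub_of_tendsto_integral_rpow {p : ℝ} (hp : 1 < p)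
    {f : ι → Ω → ℝ} {g : Ω → ℝ} (hf0 : ∀ i, 0 ≤ᵐ[μ] f i) (hg0 : 0 ≤ᵐ[μ] g)
    (hf : ∀ i, MemLp (f i) (ENNReal.ofReal p) μ) (hg : MemLp g (ENNReal.ofReal p) μ)
    (htest : Tendsto (fun i => ∫ ω, f i ω * g ω ^ (p - 1) ∂μ) l (𝓝 (∫ ω, g ω ^ p ∂μ)))
    (hnorm : Tendsto (fun i => ∫ ω, f i ω ^ p ∂μ) l (𝓝 (∫ ω, g ω ^ p ∂μ))) :
    Tendsto (fun i => eLpNorm (fun ω => f i ω - g ω) (ENNReal.ofReal p) μ) l (𝓝 0) := by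
  have hp0 : 0 < p := zero_lt_one.trans hp
  have hpq := Real.HolderConjugate.conjExponent hp
  have := hpq.ennrealOfReal
  set E := ∫ ω, g ω ^ p ∂μ
  set m : ι → Ω → ℝ := fun i ω => (f i ω + g ω) / 2
  have hm0 i : 0 ≤ᵐ[μ] m i := by
    filter_upwards [hf0 i, hg0] with ω h1 h2
    simp only [m]
    linarith
  have hm i : MemLp (m i) (ENNReal.ofReal p) μ := (hf i).add_div_two hg
  have hgq := hg.rpow_sub_one hpq hg0
  have hmtest : Tendsto (fun i => ∫ ω, m i ω * g ω ^ (p - 1) ∂μ) l (𝓝 E) := by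
    have hgg : ∫ ω, g ω * g ω ^ (p - 1) ∂μ = E := integral_congr_ae (by
      filter_upwards [hg0] with ω h using self_mul_rpow_sub_one h hp0.ne')
    convert (htest.add_const E).div_const 2 using 1
    · funext i
      have h1 : Integrable (fun ω => f i ω * g ω ^ (p - 1)) μ := (hf i).integrable_mul hgq
      have h2 : Integrable (fun ω => g ω * g ω ^ (p - 1)) μ := hg.integrable_mul hgq
      rw [← hgg, ← integral_add h1 h2, ← integral_div]
      congr 1 with ω
      ring
    · rw [add_self_div_two]
  -- weak lower semicontinuity bounds the midpoint norms from below, convexity from above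
  have hmid : Tendsto (fun i => ∫ ω, m i ω ^ p ∂μ) l (𝓝 E) := by
    refine tendsto_order.2 ⟨fun B hB =>
      eventually_lt_integral_rpow_of_tendsto_integral_mul hp hm0 hg0 hm hg hmtest hB,
      fun B hB => ?_⟩
    have hup i : ∫ ω, m i ω ^ p ∂μ ≤ (∫ ω, f i ω ^ p ∂μ + E) / 2 := by
      have hfp := (hf i).integrable_rpow hp0 (hf0 i)
      have hgp := hg.integrable_rpow hp0 hg0
      rw [← integral_add hfp hgp, ← integral_div]
      refine integral_mono_ae ((hm i).integrable_rpow hp0 (hm0 i)) ((hfp.add hgp).div_const 2) ?_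
      filter_upwards [hf0 i, hg0] with ω h1 h2 using rpow_midpoint_le hp h1 h2
    have hlim := (hnorm.add_const E).div_const 2
    rw [add_self_div_two] at hlim
    filter_upwards [hlim.eventually (gt_mem_nhds hB)] with i hi using (hup i).trans_lt hi
  exact tendsto_eLpNorm_of_tendsto_integral_abs_rpow hp0 (fun i => (hf i).sub hg)
    (tendsto_integral_abs_sub_rpow_of_tendsto_midpoint hp hf0 hg0 hf hg hnorm hmid)

theorem ae_eq_and_tendsto_eLpNorm_sub [l.NeBot] {p : ℝ} (hp : 1 < p)
    {f : ι → Ω → ℝ} {g h : Ω → ℝ} (hf0 : ∀ i, 0 ≤ᵐ[μ] f i) (hh0 : 0 ≤ᵐ[μ] h) (hhg : h ≤ᵐ[μ] g)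
    (hf : ∀ i, MemLp (f i) (ENNReal.ofReal p) μ) (hg : MemLp g (ENNReal.ofReal p) μ)
    (hh : MemLp h (ENNReal.ofReal p) μ)
    (htest_g : Tendsto (fun i => ∫ ω, f i ω * g ω ^ (p - 1) ∂μ) l
      (𝓝 (∫ ω, g ω * g ω ^ (p - 1) ∂μ)))
    (htest_h : Tendsto (fun i => ∫ ω, f i ω * h ω ^ (p - 1) ∂μ) l
      (𝓝 (∫ ω, g ω * h ω ^ (p - 1) ∂μ)))
    (hnorm : Tendsto (fun i => ∫ ω, f i ω ^ p ∂μ) l (𝓝 (∫ ω, h ω ^ p ∂μ))) :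
    h =ᵐ[μ] g ∧ Tendsto (fun i => eLpNorm (fun ω => f i ω - h ω) (ENNReal.ofReal p) μ) l (𝓝 0) := by
  have hp0 : 0 < p := zero_lt_one.trans hp
  have hg0 : 0 ≤ᵐ[μ] g := by filter_upwards [hh0, hhg] with ω h0 hle using h0.trans hle
  have hself {φ : Ω → ℝ} (hφ0 : 0 ≤ᵐ[μ] φ) : ∫ ω, φ ω * φ ω ^ (p - 1) ∂μ = ∫ ω, φ ω ^ p ∂μ :=
    integral_congr_ae (by filter_upwards [hφ0] with ω hω using self_mul_rpow_sub_one hω hp0.ne')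
  rw [hself hg0] at htest_g
  have heq : h =ᵐ[μ] g := ae_eq_of_ae_le_of_integral_rpow_le hp0 hh0 hhg
    (hh.integrable_rpow hp0 hh0) (hg.integrable_rpow hp0 hg0)
    (integral_rpow_le_of_tendsto_integral_mul hp hf0 hg0 hf hg htest_g hnorm)
  have hlim : ∫ ω, g ω * h ω ^ (p - 1) ∂μ = ∫ ω, h ω ^ p ∂μ := by
    rw [← hself hh0]
    exact integral_congr_ae (heq.mono fun ω hω => by simp only [hω])
  rw [hlim] at htest_h
  exact ⟨heq, tendsto_eLpNorm_sub_of_tendsto_integral_rpow hp hf0 hh0 hf hh htest_h hnorm⟩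

lemma tendsto_setIntegral_of_tendsto_integral_mul [IsFiniteMeasure μ] {r : ℝ≥0∞}
    {f : ι → Ω → ℝ} {f₀ : Ω → ℝ}
    (hweak : ∀ g : Ω → ℝ, MemLp g r μ →
      Tendsto (fun i => ∫ ω, f i ω * g ω ∂μ) l (𝓝 (∫ ω, f₀ ω * g ω ∂μ)))
    {A : Set Ω} (hA : MeasurableSet A) :
    Tendsto (fun i => ∫ ω in A, f i ω ∂μ) l (𝓝 (∫ ω in A, f₀ ω ∂μ)) := by
  have h := hweak _ (memLp_indicator_const r hA (1 : ℝ) (Or.inr (measure_ne_top μ A)))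
  simp_rw [← Set.indicator_mul_right, mul_one, integral_indicator hA] at h
  exact h

lemma ae_le_of_le_liminf_setLIntegral [l.NeBot] {f : ι → Ω → ℝ} {g h : Ω → ℝ}
    (hf0 : ∀ i, 0 ≤ᵐ[μ] f i) (hf : ∀ i, Integrable (f i) μ) (hg : Integrable g μ)
    (hh0 : 0 ≤ᵐ[μ] h) (hh : Integrable h μ)
    (hset : ∀ A, MeasurableSet A →
      Tendsto (fun i => ∫ ω in A, f i ω ∂μ) l (𝓝 (∫ ω in A, g ω ∂μ)))
    (hliminf : ∀ A, MeasurableSet A → ∫⁻ ω in A, ENNReal.ofReal (h ω) ∂μ ≤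
      liminf (fun i => ∫⁻ ω in A, ENNReal.ofReal (f i ω) ∂μ) l) :
    h ≤ᵐ[μ] g := by
  refine ae_le_of_forall_setIntegral_le hh hg fun A hA _ => ?_
  have hlim : Tendsto (fun i => ∫⁻ ω in A, ENNReal.ofReal (f i ω) ∂μ) l
      (𝓝 (ENNReal.ofReal (∫ ω in A, g ω ∂μ))) := by
    simp_rw [← ofReal_integral_eq_lintegral_ofReal (hf _).restrict (ae_restrict_of_ae (hf0 _))]
    exact (ENNReal.continuous_ofReal.tendsto _).comp (hset A hA)
  have hle := (hliminf A hA).trans_eq hlim.liminf_eq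
  rw [← ofReal_integral_eq_lintegral_ofReal hh.restrict (ae_restrict_of_ae hh0)] at hle
  have hg0 : 0 ≤ ∫ ω in A, g ω ∂μ := ge_of_tendsto' (hset A hA) fun i =>
    integral_nonneg_of_ae (ae_restrict_of_ae (hf0 i))
  exact (ENNReal.ofReal_le_ofReal_iff hg0).1 hle

lemma abs_integral_mul_sub_integral_mul_le {f v v₀ : Ω → ℝ} {δ : ℝ} (hf0 : 0 ≤ᵐ[μ] f)
    (hf : Integrable f μ) (hfv : Integrable (fun ω => f ω * v ω) μ)
    (hv : AEStronglyMeasurable v μ) (hv₀ : AEStronglyMeasurable v₀ μ)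
    (hclose : ∀ᵐ ω ∂μ, |v₀ ω - v ω| ≤ δ) :
    |∫ ω, f ω * v₀ ω ∂μ - ∫ ω, f ω * v ω ∂μ| ≤ δ * ∫ ω, f ω ∂μ := by
  have hgap : Integrable (fun ω => f ω * (v₀ ω - v ω)) μ := hf.mul_bdd (hv₀.sub hv) hclose
  have hfv₀ : Integrable (fun ω => f ω * v₀ ω) μ :=
    (hfv.add hgap).congr (ae_of_all _ fun ω => by simp only [Pi.add_apply]; ring)
  rw [← integral_sub hfv₀ hfv, ← Real.norm_eq_abs, ← integral_const_mul]
  refine norm_integral_le_of_norm_le (hf.const_mul δ) ?_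
  filter_upwards [hf0, hclose] with ω h0 h
  rw [← mul_sub, norm_mul, Real.norm_of_nonneg h0, Real.norm_eq_abs, mul_comm]
  exact mul_le_mul_of_nonneg_right h h0

lemma tendsto_integral_mul_of_tendstoUniformly {f w : ι → Ω → ℝ} {w₀ : Ω → ℝ} {c C L : ℝ}
    (hc : 0 < c) (hf0 : ∀ i, 0 ≤ᵐ[μ] f i) (hf : ∀ i, Integrable (f i) μ)
    (hwm : ∀ i, AEStronglyMeasurable (w i) μ) (hw : ∀ i, ∀ᵐ ω ∂μ, c ≤ w i ω ∧ w i ω ≤ C)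
    (hw₀m : AEStronglyMeasurable w₀ μ) (hunif : TendstoUniformly w w₀ l)
    (hlim : Tendsto (fun i => ∫ ω, f i ω * w i ω ∂μ) l (𝓝 L)) :
    Tendsto (fun i => ∫ ω, f i ω * w₀ ω ∂μ) l (𝓝 L) := by
  have hfw i : Integrable (fun ω => f i ω * w i ω) μ := (hf i).mul_bdd (hwm i) (c := C) (by
    filter_upwards [hw i] with ω h
    rw [Real.norm_eq_abs, abs_le]
    constructor <;> linarith [h.1, h.2])
  set M := (L + 1) / c
  have hmass : ∀ᶠ i in l, ∫ ω, f i ω ∂μ ≤ M := by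
    filter_upwards [hlim.eventually (gt_mem_nhds (lt_add_one L))] with i hi
    rw [le_div_iff₀ hc, ← integral_mul_const]
    refine (integral_mono_ae ((hf i).mul_const c) (hfw i) ?_).trans hi.le
    filter_upwards [hf0 i, hw i] with ω h0 h using mul_le_mul_of_nonneg_left h.1 h0
  suffices hdiff : Tendsto (fun i => ∫ ω, f i ω * w₀ ω ∂μ - ∫ ω, f i ω * w i ω ∂μ) l (𝓝 0) by
    simpa using hdiff.add hlim
  refine Metric.tendsto_nhds.2 fun ε hε => ?_
  set δ := ε / (|M| + 1)
  have hδ : 0 < δ := by positivity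
  filter_upwards [Metric.tendstoUniformly_iff.1 hunif δ hδ, hmass] with i hclose hi
  rw [Real.dist_eq, sub_zero]
  calc _ ≤ δ * ∫ ω, f i ω ∂μ := abs_integral_mul_sub_integral_mul_le (hf0 i) (hf i) (hfw i)
          (hwm i) hw₀m (ae_of_all _ fun ω => (hclose ω).le)
    _ ≤ δ * |M| := mul_le_mul_of_nonneg_left (hi.trans (le_abs_self M)) hδ.le
    _ < ε := by
        rw [div_mul_eq_mul_div, div_lt_iff₀ (by positivity)]
        nlinarith [abs_nonneg M]

lemma integral_withDensity_ofReal {w : Ω → ℝ} (hw : Measurable w) (hw0 : 0 ≤ᵐ[μ] w)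
    (f : Ω → ℝ) :
    ∫ ω, f ω ∂μ.withDensity (fun ω => ENNReal.ofReal (w ω)) = ∫ ω, f ω * w ω ∂μ := by
  rw [integral_withDensity_eq_integral_toReal_smul hw.ennreal_ofReal
    (ae_of_all _ fun _ => ofReal_lt_top)]
  refine integral_congr_ae ?_
  filter_upwards [hw0] with ω h
  rw [toReal_ofReal h, smul_eq_mul, mul_comm]

lemma withDensity_ofReal_le_smul {w : Ω → ℝ} {C : ℝ} (hwC : ∀ᵐ ω ∂μ, w ω ≤ C) :
    μ.withDensity (fun ω => ENNReal.ofReal (w ω)) ≤ ENNReal.ofReal C • μ := by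
  rw [← withDensity_const]
  exact withDensity_mono (by filter_upwards [hwC] with ω h using ofReal_le_ofReal h)

lemma le_smul_withDensity_ofReal {w : Ω → ℝ} {c : ℝ} (hc : 0 < c) (hcw : ∀ᵐ ω ∂μ, c ≤ w ω) :
    μ ≤ (ENNReal.ofReal c)⁻¹ • μ.withDensity (fun ω => ENNReal.ofReal (w ω)) := by
  have hle : ENNReal.ofReal c • μ ≤ μ.withDensity (fun ω => ENNReal.ofReal (w ω)) := by
    rw [← withDensity_const]
    exact withDensity_mono (by filter_upwards [hcw] with ω h using ofReal_le_ofReal h)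
  calc μ = (ENNReal.ofReal c)⁻¹ • ENNReal.ofReal c • μ := by
        rw [smul_smul, ENNReal.inv_mul_cancel (by simpa using hc) ofReal_ne_top, one_smul]
    _ ≤ _ := by gcongr

lemma tendsto_integral_mul_withDensity_ofReal {w : Ω → ℝ} {r : ℝ≥0∞} {C : ℝ}
    (hw : Measurable w) (hw0 : 0 ≤ᵐ[μ] w) (hwC : ∀ᵐ ω ∂μ, w ω ≤ C)
    {f : ι → Ω → ℝ} {f₀ : Ω → ℝ}
    (hweak : ∀ g : Ω → ℝ, MemLp g r μ →
      Tendsto (fun i => ∫ ω, f i ω * g ω ∂μ) l (𝓝 (∫ ω, f₀ ω * g ω ∂μ)))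
    {g : Ω → ℝ} (hg : MemLp g r μ) :
    Tendsto (fun i => ∫ ω, f i ω * g ω ∂μ.withDensity (fun ω => ENNReal.ofReal (w ω))) l
      (𝓝 (∫ ω, f₀ ω * g ω ∂μ.withDensity (fun ω => ENNReal.ofReal (w ω)))) := by
  have hgw : MemLp (fun ω => g ω * w ω) r μ := by
    simpa only [mul_comm] using hg.mul' (memLp_top_of_bound hw.aestronglyMeasurable C
      (by filter_upwards [hw0, hwC] with ω h0 h; rwa [Real.norm_of_nonneg h0]))
  simp only [integral_withDensity_ofReal hw hw0, mul_assoc]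
  exact hweak _ hgw

end

theorem weighted_weak_limit_strong_convergence_general
    {Ω : Type*} [MeasurableSpace Ω] (μ : Measure Ω) [IsFiniteMeasure μ]
    (p p' : ℝ) (hp : 1 < p) (hpp' : 1 / p + 1 / p' = 1)
    (c C : ℝ) (hc : 0 < c)
    (Ψseq : ℕ → Ω → ℝ) (Ψ Φ : Ω → ℝ)
    (hΨmem : ∀ j, MemLp (Ψseq j) (ENNReal.ofReal p) μ)
    (hΨnn : ∀ j, 0 ≤ᵐ[μ] Ψseq j)
    (hΨlim : MemLp Ψ (ENNReal.ofReal p) μ)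
    (hweak : ∀ g : Ω → ℝ, MemLp g (ENNReal.ofReal p') μ →
      Tendsto (fun j => ∫ ω, Ψseq j ω * g ω ∂μ) atTop (𝓝 (∫ ω, Ψ ω * g ω ∂μ)))
    (hΦmeas : Measurable Φ) (hΦnn : ∀ ω, 0 ≤ Φ ω)
    (hliminf : ∀ A : Set Ω, MeasurableSet A →
      ∫⁻ ω in A, ENNReal.ofReal (Φ ω) ∂μ ≤
        liminf (fun j => ∫⁻ ω in A, ENNReal.ofReal (Ψseq j ω) ∂μ) atTop)
    (η : ℕ → Ω → ℝ) (η₀ : Ω → ℝ)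
    (hηmeas : ∀ j, Measurable (η j)) (hη₀meas : Measurable η₀)
    (hηbdd : ∀ j, ∀ᵐ ω ∂μ, c ≤ η j ω ∧ η j ω ≤ C)
    (hη₀bdd : ∀ᵐ ω ∂μ, c ≤ η₀ ω ∧ η₀ ω ≤ C)
    (hηunif : TendstoUniformly η η₀ atTop)
    (hΦp : Integrable (fun ω => Φ ω ^ p * η₀ ω) μ)
    (hnorm : Tendsto (fun j => ∫ ω, Ψseq j ω ^ p * η j ω ∂μ) atTop
      (𝓝 (∫ ω, Φ ω ^ p * η₀ ω ∂μ))) :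
    Φ =ᵐ[μ] Ψ ∧
      Tendsto (fun j => eLpNorm (fun ω => Ψseq j ω - Φ ω) (ENNReal.ofReal p) μ)
        atTop (𝓝 0) := by
  have hp0 : 0 < p := zero_lt_one.trans hp
  have hpq : p.HolderConjugate p' := Real.holderConjugate_iff.2 ⟨hp, by simpa using hpp'⟩
  have hone : 1 ≤ ENNReal.ofReal p := one_le_ofReal.2 hp.le
  have hη₀0 : 0 ≤ᵐ[μ] η₀ := hη₀bdd.mono fun _ h => hc.le.trans h.1
  have hΦ0 : 0 ≤ᵐ[μ] Φ := ae_of_all _ hΦnn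
  have hΦmem : MemLp Φ (ENNReal.ofReal p) μ := memLp_of_integrable_rpow_mul hp0 hc
    hΦmeas.aestronglyMeasurable hΦ0 (hη₀bdd.mono fun _ h => h.1) hΦp
  have hΦΨ : Φ ≤ᵐ[μ] Ψ := ae_le_of_le_liminf_setLIntegral hΨnn
    (fun j => (hΨmem j).integrable hone) (hΨlim.integrable hone) hΦ0 (hΦmem.integrable hone)
    (fun _ hA => tendsto_setIntegral_of_tendsto_integral_mul hweak hA) hliminf
  have hΨ0 : 0 ≤ᵐ[μ] Ψ := by filter_upwards [hΦΨ] with ω h using (hΦnn ω).trans h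
  set ν := μ.withDensity fun ω => ENNReal.ofReal (η₀ ω)
  have hνμ : ν ≤ ENNReal.ofReal C • μ := withDensity_ofReal_le_smul (hη₀bdd.mono fun _ h => h.2)
  have hμν : μ ≤ (ENNReal.ofReal c)⁻¹ • ν :=
    le_smul_withDensity_ofReal hc (hη₀bdd.mono fun _ h => h.1)
  have hac : ν ≪ μ := withDensity_absolutelyContinuous μ _
  have hν {f : Ω → ℝ} (hf : MemLp f (ENNReal.ofReal p) μ) : MemLp f (ENNReal.ofReal p) ν :=
    hf.of_measure_le_smul ofReal_ne_top hνμ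
  have htest {g : Ω → ℝ} (hg0 : 0 ≤ᵐ[μ] g) (hg : MemLp g (ENNReal.ofReal p) μ) :=
    tendsto_integral_mul_withDensity_ofReal hη₀meas hη₀0 (hη₀bdd.mono fun _ h => h.2) hweak
      (hg.rpow_sub_one hpq hg0)
  have henergy : Tendsto (fun j => ∫ ω, Ψseq j ω ^ p ∂ν) atTop (𝓝 (∫ ω, Φ ω ^ p ∂ν)) := by
    simp only [ν, integral_withDensity_ofReal hη₀meas hη₀0]
    exact tendsto_integral_mul_of_tendstoUniformly hc
      (fun j => (hΨnn j).mono fun _ h => Real.rpow_nonneg h p)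
      (fun j => (hΨmem j).integrable_rpow hp0 (hΨnn j)) (fun j => (hηmeas j).aestronglyMeasurable)
      hηbdd hη₀meas.aestronglyMeasurable hηunif hnorm
  obtain ⟨hΦΨν, hconv⟩ := ae_eq_and_tendsto_eLpNorm_sub hp (fun j => hac.ae_le (hΨnn j))
    (hac.ae_le hΦ0) (hac.ae_le hΦΨ) (fun j => hν (hΨmem j)) (hν hΨlim) (hν hΦmem)
    (htest hΨ0 hΨlim) (htest hΦ0 hΦmem) henergy
  exact ⟨(Measure.absolutelyContinuous_of_le_smul hμν).ae_eq hΦΨν,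
    tendsto_eLpNorm_of_measure_le_smul (by simpa using hc) hμν hconv⟩

/-- Weighted version (Theorem 2 abstraction): with weights `c ≤ η_j, η ≤ C`
converging uniformly, weak `L^p` convergence of nonnegative `Ψ_j` to `Ψ`,
the liminf inequality for `Φ`, and convergence of the weighted `p`-energies
`∫ Ψ_j^p η_j → ∫ Φ^p η`, one gets `Φ = Ψ` a.e. and `Ψ_j → Φ` strongly in `L^p`. -/
theorem weighted_weak_limit_strong_convergence
    {Ω : Type*} [MeasurableSpace Ω] (μ : Measure Ω) [IsFiniteMeasure μ]
    (p p' : ℝ) (hp : 1 < p) (hpp' : 1 / p + 1 / p' = 1)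
    (c C : ℝ) (hc : 0 < c) (hcC : c ≤ C)
    (Ψseq : ℕ → Ω → ℝ) (Ψ Φ : Ω → ℝ)
    (hΨmem : ∀ j, MemLp (Ψseq j) (ENNReal.ofReal p) μ)
    (hΨnn : ∀ j, 0 ≤ᵐ[μ] Ψseq j)
    (hΨlim : MemLp Ψ (ENNReal.ofReal p) μ)
    (hweak : ∀ g : Ω → ℝ, MemLp g (ENNReal.ofReal p') μ →
      Tendsto (fun j => ∫ ω, Ψseq j ω * g ω ∂μ) atTop (𝓝 (∫ ω, Ψ ω * g ω ∂μ)))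
    (hΦmeas : Measurable Φ) (hΦnn : ∀ ω, 0 ≤ Φ ω)
    (hliminf : ∀ A : Set Ω, MeasurableSet A →
      ∫⁻ ω in A, ENNReal.ofReal (Φ ω) ∂μ ≤
        liminf (fun j => ∫⁻ ω in A, ENNReal.ofReal (Ψseq j ω) ∂μ) atTop)
    (η : ℕ → Ω → ℝ) (η₀ : Ω → ℝ)
    (hηmeas : ∀ j, Measurable (η j)) (hη₀meas : Measurable η₀)
    (hηbdd : ∀ j, ∀ᵐ ω ∂μ, c ≤ η j ω ∧ η j ω ≤ C)
    (hη₀bdd : ∀ᵐ ω ∂μ, c ≤ η₀ ω ∧ η₀ ω ≤ C)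
    (hηunif : TendstoUniformly η η₀ atTop)
    (hΦp : Integrable (fun ω => Φ ω ^ p * η₀ ω) μ)
    (hnorm : Tendsto (fun j => ∫ ω, Ψseq j ω ^ p * η j ω ∂μ) atTop
      (𝓝 (∫ ω, Φ ω ^ p * η₀ ω ∂μ))) :
    Φ =ᵐ[μ] Ψ ∧
      Tendsto (fun j => eLpNorm (fun ω => Ψseq j ω - Φ ω) (ENNReal.ofReal p) μ)
        atTop (𝓝 0) :=
  weighted_weak_limit_strong_convergence_general μ p p' hp hpp' c C hc Ψseq Ψ Φ hΨmem hΨnn hΨlim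
    hweak hΦmeas hΦnn hliminf η η₀ hηmeas hη₀meas hηbdd hη₀bdd hηunif hΦp hnorm
end
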